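/- arXiv:1709.05580 — 8 statements merged into one kernel-verified Lean document; each statement's English description precedes it below -/
import Mathlib

section
/- Let I be a compact metric space and Y a complete metric space. Let 𝒮 be the set of compact subsets K ⊆ I × Y with π(K) = I (equivalently, upper semi-continuous maps from I to the nonempty compact subsets of Y), equipped with the uniform distance d_𝒮(K, K') := sup_{x∈I} d_H(K(x), K'(x)), where K(x) := {y ∈ Y : (x, y) ∈ K}. Then the metric space (𝒮, d_𝒮) is complete. -/
/-- The fiber of `K ⊆ I × Y` over `x ∈ I`. -/
def fiber {I Y : Type*} (K : Set (I × Y)) (x : I) : Set Y := {y : Y | (x, y) ∈ K}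

/-- The uniform distance `d_𝒮(K, K') = sup_{x ∈ I} d_H(K(x), K'(x))` between two
compact subsets of `I × Y` projecting onto `I`. -/
noncomputable def dS {I Y : Type*} [MetricSpace I] [MetricSpace Y]
    (K K' : Set (I × Y)) : ℝ :=
  ⨆ x : I, Metric.hausdorffDist (fiber K x) (fiber K' x)

/-!
An element `K` of `𝒮` is the graph of its fibre map `x ↦ K(x) : I → NonemptyCompacts Y`, and
`d_𝒮` is the uniform distance between fibre maps. As `NonemptyCompacts Y` with the Hausdorff
metric is complete, a `d_𝒮`-Cauchy sequence of fibre maps converges uniformly to some `Φ`, and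
it remains to see that the graph of `Φ` is compact. It is totally bounded, lying in the
`ε`-thickening of a compact graph `K_N`. It is closed: if `K_N` is `ε`-close to `Φ`, the graph
of `Φ` lies in `{(x, y) | infDist y (K_N(x)) ≤ ε}`, which is closed as the projection of a
closed subset of `(I × Y) × K_N` along the compact factor `K_N`; so every point `(x, y)` of the
closure has `infDist y (Φ x) ≤ 2ε`.
-/

open Metric TopologicalSpace Filter Set Topology

section Fiber

variable {I Y : Type*} {K : Set (I × Y)}

lemma isCompact_fiber [TopologicalSpace I] [TopologicalSpace Y] [T1Space I]
    (hK : IsCompact K) (x : I) : IsCompact (fiber K x) := by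
  have : fiber K x = Prod.snd '' (K ∩ Prod.fst ⁻¹' {x}) := by
    ext y
    simp [fiber, and_comm]
  rw [this]
  exact (hK.inter_right (isClosed_singleton.preimage continuous_fst)).image continuous_snd

lemma fiber_nonempty (hπ : Prod.fst '' K = univ) (x : I) : (fiber K x).Nonempty := by
  obtain ⟨⟨x', y⟩, hy, rfl⟩ : x ∈ Prod.fst '' K := hπ ▸ mem_univ x
  exact ⟨y, hy⟩

end Fiber

lemma TopologicalSpace.NonemptyCompacts.hausdorffEDist_ne_top {Y : Type*} [MetricSpace Y]
    (s t : NonemptyCompacts Y) : hausdorffEDist (s : Set Y) t ≠ ⊤ :=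
  edist_ne_top s t

lemma Metric.totallyBounded_of_forall_subset_thickening {X : Type*} [PseudoMetricSpace X]
    {s : Set X} (h : ∀ ε > 0, ∃ t, TotallyBounded t ∧ s ⊆ thickening ε t) : TotallyBounded s := by
  refine totallyBounded_iff.2 fun ε hε => ?_
  obtain ⟨t, ht, hst⟩ := h (ε / 2) (half_pos hε)
  obtain ⟨u, hu, htu⟩ := totallyBounded_iff.1 ht (ε / 2) (half_pos hε)
  refine ⟨u, hu, fun x hx => ?_⟩
  obtain ⟨z, hz, hxz⟩ := mem_thickening_iff.1 (hst hx)
  obtain ⟨c, hc, hzc⟩ := mem_iUnion₂.1 (htu hz)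
  refine mem_iUnion₂.2 ⟨c, hc, ?_⟩
  rw [mem_ball] at hzc ⊢
  linarith [dist_triangle x z c]

namespace SetValued

variable {I Y : Type*} [MetricSpace Y]

def graph (Φ : I → NonemptyCompacts Y) : Set (I × Y) := {p | p.2 ∈ Φ p.1}

lemma fst_image_graph (Φ : I → NonemptyCompacts Y) : Prod.fst '' graph Φ = univ :=
  eq_univ_of_forall fun x => ⟨(x, (Φ x).nonempty.some), (Φ x).nonempty.some_mem, rfl⟩

lemma mem_snd_image_graph {Φ : I → NonemptyCompacts Y} {x : I} {y : Y} (hy : y ∈ Φ x) :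
    y ∈ Prod.snd '' graph Φ :=
  ⟨(x, y), hy, rfl⟩

lemma graph_subset_setOf_infDist_le {Φ Ψ : I → NonemptyCompacts Y} {ε : ℝ}
    (h : ∀ x, dist (Φ x) (Ψ x) ≤ ε) : graph Φ ⊆ {p : I × Y | infDist p.2 (Ψ p.1) ≤ ε} := by
  intro p hp
  calc infDist p.2 (Ψ p.1)
      ≤ infDist p.2 (Φ p.1) + dist (Φ p.1) (Ψ p.1) :=
        infDist_le_infDist_add_hausdorffDist (NonemptyCompacts.hausdorffEDist_ne_top _ _)
    _ ≤ ε := by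
      rw [infDist_zero_of_mem (show p.2 ∈ (Φ p.1 : Set Y) from hp), zero_add]
      exact h p.1

variable [MetricSpace I]

lemma dist_le_dS_graph {Φ Ψ : I → NonemptyCompacts Y} (hΦ : IsCompact (graph Φ))
    (hΨ : IsCompact (graph Ψ)) (x : I) : dist (Φ x) (Ψ x) ≤ dS (graph Φ) (graph Ψ) := by
  refine le_ciSup (f := fun x => dist (Φ x) (Ψ x))
    ⟨diam (Prod.snd '' graph Φ ∪ Prod.snd '' graph Ψ), ?_⟩ x
  rintro _ ⟨x, rfl⟩
  have hbdd := (hΦ.image continuous_snd).isBounded.union (hΨ.image continuous_snd).isBounded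
  calc dist (Φ x) (Ψ x) ≤ diam ((Φ x : Set Y) ∪ Ψ x) :=
        hausdorffDist_le_diam (Φ x).nonempty (Φ x).isCompact.isBounded (Ψ x).nonempty
          (Ψ x).isCompact.isBounded
    _ ≤ diam (Prod.snd '' graph Φ ∪ Prod.snd '' graph Ψ) :=
        diam_mono (union_subset_union (fun _ => mem_snd_image_graph)
          (fun _ => mem_snd_image_graph)) hbdd

lemma tendsto_dS_graph_of_tendstoUniformly {G : ℕ → I → NonemptyCompacts Y}
    {Φ : I → NonemptyCompacts Y} (h : TendstoUniformly G Φ atTop) :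
    Tendsto (fun n => dS (graph (G n)) (graph Φ)) atTop (𝓝 0) := by
  refine Metric.tendsto_nhds.2 fun ε hε => ?_
  filter_upwards [Metric.tendstoUniformly_iff.1 h (ε / 2) (half_pos hε)] with n hn
  have hnonneg : 0 ≤ dS (graph (G n)) (graph Φ) := Real.iSup_nonneg fun _ => hausdorffDist_nonneg
  have hle : dS (graph (G n)) (graph Φ) ≤ ε / 2 :=
    Real.iSup_le (fun x => (dist_comm (G n x) (Φ x)).trans_le (hn x).le) (half_pos hε).le
  rw [Real.dist_eq, sub_zero, abs_of_nonneg hnonneg]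
  linarith

lemma isClosed_setOf_infDist_le {Ψ : I → NonemptyCompacts Y} (hΨ : IsCompact (graph Ψ)) (ε : ℝ) :
    IsClosed {p : I × Y | infDist p.2 (Ψ p.1) ≤ ε} := by
  have : CompactSpace (graph Ψ) := isCompact_iff_compactSpace.1 hΨ
  have hset : {p : I × Y | infDist p.2 (Ψ p.1) ≤ ε} = Prod.fst ''
      ({pq : (I × Y) × graph Ψ | pq.1.1 = pq.2.1.1} ∩ {pq | dist pq.1.2 pq.2.1.2 ≤ ε}) := by
    ext p
    constructor
    · intro hp
      obtain ⟨z, hz, hdist⟩ := (Ψ p.1).isCompact.exists_infDist_eq_dist (Ψ p.1).nonempty p.2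
      exact ⟨(p, ⟨(p.1, z), hz⟩), ⟨rfl, (hdist ▸ hp : dist p.2 z ≤ ε)⟩, rfl⟩
    · rintro ⟨⟨p, q, hq⟩, ⟨hpq, hdist⟩, rfl⟩
      exact (infDist_le_dist_of_mem (show q.2 ∈ Ψ p.1 by rwa [hpq])).trans hdist
  rw [hset]
  refine isClosedMap_fst_of_compactSpace _ ((isClosed_eq ?_ ?_).inter (isClosed_le ?_ ?_)) <;>
    fun_prop

lemma graph_subset_thickening {Φ Ψ : I → NonemptyCompacts Y} {ε : ℝ}
    (h : ∀ x, dist (Φ x) (Ψ x) < ε) : graph Φ ⊆ thickening ε (graph Ψ) := by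
  rintro ⟨x, y⟩ (hy : y ∈ Φ x)
  obtain ⟨z, hz, hyz⟩ :=
    exists_dist_lt_of_hausdorffDist_lt hy (h x) ((Φ x).hausdorffEDist_ne_top (Ψ x))
  exact mem_thickening_iff.2 ⟨(x, z), hz, by simpa [Prod.dist_eq] using hyz⟩

variable {G : ℕ → I → NonemptyCompacts Y} {Φ : I → NonemptyCompacts Y}

lemma isClosed_graph_of_tendstoUniformly (hG : ∀ n, IsCompact (graph (G n)))
    (h : TendstoUniformly G Φ atTop) : IsClosed (graph Φ) := by
  refine isClosed_of_closure_subset fun p hp => ?_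
  change p.2 ∈ (Φ p.1 : Set Y)
  rw [(Φ p.1).isCompact.isClosed.mem_iff_infDist_zero (Φ p.1).nonempty]
  refine le_antisymm (le_of_forall_pos_le_add fun ε hε => ?_) infDist_nonneg
  obtain ⟨N, hN⟩ := (Metric.tendstoUniformly_iff.1 h (ε / 2) (half_pos hε)).exists
  have hp' : infDist p.2 (G N p.1) ≤ ε / 2 :=
    closure_minimal (graph_subset_setOf_infDist_le fun x => (hN x).le)
      (isClosed_setOf_infDist_le (hG N) _) hp
  calc infDist p.2 (Φ p.1) ≤ infDist p.2 (G N p.1) + dist (G N p.1) (Φ p.1) :=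
        infDist_le_infDist_add_hausdorffDist (NonemptyCompacts.hausdorffEDist_ne_top _ _)
    _ ≤ 0 + ε := by linarith [dist_comm (G N p.1) (Φ p.1), hN p.1]

lemma totallyBounded_graph_of_tendstoUniformly (hG : ∀ n, IsCompact (graph (G n)))
    (h : TendstoUniformly G Φ atTop) : TotallyBounded (graph Φ) := by
  refine totallyBounded_of_forall_subset_thickening fun ε hε => ?_
  obtain ⟨N, hN⟩ := (Metric.tendstoUniformly_iff.1 h ε hε).exists
  exact ⟨graph (G N), (hG N).totallyBounded, graph_subset_thickening hN⟩

lemma isCompact_graph_of_tendstoUniformly [CompleteSpace I] [CompleteSpace Y]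
    (hG : ∀ n, IsCompact (graph (G n)))
    (h : TendstoUniformly G Φ atTop) : IsCompact (graph Φ) :=
  (totallyBounded_graph_of_tendstoUniformly hG h).isCompact_of_isClosed
    (isClosed_graph_of_tendstoUniformly hG h)

lemma exists_tendstoUniformly_of_cauchySeq_dS [CompleteSpace Y]
    (hG : ∀ n, IsCompact (graph (G n)))
    (hcauchy : ∀ ε > (0 : ℝ), ∃ N, ∀ m ≥ N, ∀ n ≥ N, dS (graph (G m)) (graph (G n)) < ε) :
    ∃ Φ : I → NonemptyCompacts Y, TendstoUniformly G Φ atTop := by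
  have hunif : UniformCauchySeqOn G atTop univ := by
    refine Metric.uniformCauchySeqOn_iff.2 fun ε hε => ?_
    obtain ⟨N, hN⟩ := hcauchy ε hε
    exact ⟨N, fun m hm n hn x _ => (dist_le_dS_graph (hG m) (hG n) x).trans_lt (hN m hm n hn)⟩
  choose Φ hΦ using fun x => cauchySeq_tendsto_of_complete (hunif.cauchySeq (mem_univ x))
  exact ⟨Φ, tendstoUniformlyOn_univ.1 (hunif.tendstoUniformlyOn_of_tendsto fun x _ => hΦ x)⟩

end SetValued

open SetValued

/-- Let `I` be a compact metric space and `Y` a complete metric space.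
The space `𝒮` of compact subsets `K ⊆ I × Y` with `π(K) = I`, equipped with the uniform
distance `d_𝒮(K, K') = sup_x d_H(K(x), K'(x))`, is complete: every Cauchy sequence in
`𝒮` converges (for `d_𝒮`) to an element of `𝒮`. -/
theorem stmt_3 {I Y : Type*} [MetricSpace I] [CompactSpace I]
    [MetricSpace Y] [CompleteSpace Y]
    (K : ℕ → Set (I × Y))
    (hcp : ∀ n, IsCompact (K n)) (hπ : ∀ n, Prod.fst '' K n = Set.univ)
    (hcauchy : ∀ ε > (0 : ℝ), ∃ N : ℕ, ∀ m ≥ N, ∀ n ≥ N, dS (K m) (K n) < ε) :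
    ∃ L : Set (I × Y), IsCompact L ∧ Prod.fst '' L = Set.univ ∧
      Filter.Tendsto (fun n => dS (K n) L) Filter.atTop (nhds 0) := by
  let G : ℕ → I → NonemptyCompacts Y := fun n x =>
    ⟨⟨fiber (K n) x, isCompact_fiber (hcp n) x⟩, fiber_nonempty (hπ n) x⟩
  have hK : ∀ n, graph (G n) = K n := fun n => rfl
  simp only [← hK] at hcp hcauchy ⊢
  obtain ⟨Φ, hΦ⟩ := exists_tendstoUniformly_of_cauchySeq_dS hcp hcauchy
  exact ⟨graph Φ, isCompact_graph_of_tendstoUniformly hcp hΦ, fst_image_graph Φ,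
    tendsto_dS_graph_of_tendstoUniformly hΦ⟩
end

section
/- Under the standard-form hypotheses (i')–(iii'), there exists a unique compact set K ⊆ I × ℝ^d with π(K) = I such that the closure of T̃(K) := ⋃_{α∈𝒜} T̃_α(K ∩ (I_α × ℝ^d)) equals K. -/
/-!
Since `T'_α(x)` expands by `C`, the inverse transpose `W_α(x)` has norm at most `C⁻¹`, so every
fibre map `y ↦ W_α(x) y + f_α(x)` is a `C⁻¹`-contraction. Say that `A` is fibrewise `δ`-near `B`
if each point of `A` lies within `δ` of a point of `B` over the same base point. Applying `T̃`
(and then closures, against compact sets) turns `δ` into `δ / C`. Two invariant compact sets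
with the same projection are fibrewise near each other at some distance, hence at every
distance `C⁻ⁿ` times it, so they coincide. For existence, `I × closedBall 0 R` is mapped into
itself for `R` large; the intersection `K` of its iterates is compact, projects onto `I` by
compactness, and satisfies `closure (T̃ K) ⊆ K`. The `n`-th iterate is fibrewise `C⁻ⁿ M`-near
`K`, so `K`, which lies in the `(n+1)`-st iterate, is fibrewise `C⁻ⁿ⁻¹ M`-near `closure (T̃ K)`.
-/

open MeasureTheory

open Set Metric Function Filter Topology NNReal

open ContinuousLinearMap in
theorem ContinuousLinearMap.norm_le_inv_of_leftInverse_adjoint {𝕜 E : Type*} [RCLike 𝕜]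
    [NormedAddCommGroup E] [InnerProductSpace 𝕜 E] [CompleteSpace E] {A W : E →L[𝕜] E} {C : ℝ}
    (hC : 0 < C) (hA : ∀ v, C * ‖v‖ ≤ ‖A v‖) (hW : ∀ y, W (adjoint A y) = y) : ‖W‖ ≤ C⁻¹ := by
  have hAW : A ∘L adjoint W = .id 𝕜 E := by
    simpa [adjoint_id] using
      congrArg adjoint (ContinuousLinearMap.ext hW : W ∘L adjoint A = .id 𝕜 E)
  rw [← LinearIsometryEquiv.norm_map adjoint W]
  refine opNorm_le_bound _ (by positivity) fun z => ?_
  rw [inv_mul_eq_div, le_div_iff₀ hC, mul_comm]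
  simpa using (hA (adjoint W z)).trans_eq (by rw [← comp_apply, hAW, id_apply])

section FiberwiseNear

variable {X Y : Type*}

def FiberwiseNear [PseudoMetricSpace Y] (δ : ℝ) (A B : Set (X × Y)) : Prop :=
  ∀ p ∈ A, ∃ y, (p.1, y) ∈ B ∧ dist p.2 y ≤ δ

variable [PseudoMetricSpace Y] {δ δ' : ℝ} {A A' B B' : Set (X × Y)}

theorem FiberwiseNear.mono (h : FiberwiseNear δ A B) (hA : A' ⊆ A) (hB : B ⊆ B') (hδ : δ ≤ δ') :
    FiberwiseNear δ' A' B' := fun p hp =>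
  let ⟨y, hyB, hy⟩ := h p (hA hp)
  ⟨y, hB hyB, hy.trans hδ⟩

theorem fiberwiseNear_of_fst_image_subset {M : ℝ} (hAB : Prod.fst '' A ⊆ Prod.fst '' B)
    (hM : ∀ p ∈ A, ∀ q ∈ B, dist p.2 q.2 ≤ M) : FiberwiseNear M A B := by
  intro p hp
  obtain ⟨q, hqB, hq⟩ := hAB ⟨p, hp, rfl⟩
  exact ⟨q.2, by rwa [← hq], hM p hp q hqB⟩

theorem FiberwiseNear.closure_left [TopologicalSpace X] [T2Space X] (h : FiberwiseNear δ A B)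
    (hB : IsCompact B) : FiberwiseNear δ (closure A) B := by
  have : CompactSpace B := isCompact_iff_compactSpace.mp hB
  -- The points fibrewise `δ`-near `B` form the projection of `E` along the compact factor `B`.
  let E : Set ((X × Y) × B) := {z | z.1.1 = (z.2 : X × Y).1 ∧ dist z.1.2 (z.2 : X × Y).2 ≤ δ}
  have hE : IsClosed E :=
    (isClosed_eq (f := fun z : (X × Y) × B => z.1.1) (g := fun z => (z.2 : X × Y).1)
      (by fun_prop) (by fun_prop)).inter
    (isClosed_le (f := fun z : (X × Y) × B => dist z.1.2 (z.2 : X × Y).2) (by fun_prop)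
      continuous_const)
  have hAE : A ⊆ Prod.fst '' E := fun p hp => by
    obtain ⟨y, hyB, hy⟩ := h p hp
    exact ⟨(p, ⟨(p.1, y), hyB⟩), ⟨rfl, hy⟩, rfl⟩
  intro p hp
  obtain ⟨⟨p', ⟨q, hqB⟩⟩, ⟨hq1, hq2⟩, rfl⟩ :=
    closure_minimal hAE (isClosedMap_fst_of_compactSpace _ hE) hp
  refine ⟨q.2, ?_, hq2⟩
  simp only at hq1
  rwa [hq1]

theorem subset_of_forall_fiberwiseNear_pow [TopologicalSpace X] {r c : ℝ} (hB : IsClosed B)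
    (hr0 : 0 ≤ r) (hr : r < 1) (h : ∀ n : ℕ, FiberwiseNear (r ^ n * c) A B) : A ⊆ B := by
  intro p hp
  choose y hyB hy using fun n => h n p hp
  have hlim : Tendsto y atTop (𝓝 p.2) := by
    refine tendsto_iff_dist_tendsto_zero.2 (squeeze_zero (fun _ => dist_nonneg)
      (fun n => (dist_comm _ _).trans_le (hy n)) ?_)
    simpa using (tendsto_pow_atTop_nhds_zero_of_lt_one hr0 hr).mul_const c
  exact hB.mem_of_tendsto (tendsto_const_nhds.prodMk_nhds hlim) (.of_forall hyB)

end FiberwiseNear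

theorem subset_image_iInter_of_antitone {α β : Type*} [TopologicalSpace α] [TopologicalSpace β]
    [T1Space β] {f : α → β} (hf : Continuous f) {A : ℕ → Set α} (hA : Antitone A)
    (hA0 : IsCompact (A 0)) (hcl : ∀ n, IsClosed (A n)) {I : Set β} (hI : ∀ n, I ⊆ f '' A n) :
    I ⊆ f '' ⋂ n, A n := by
  intro x hx
  obtain ⟨p, hp⟩ := IsCompact.nonempty_iInter_of_sequence_nonempty_isCompact_isClosed
    (fun n => A n ∩ f ⁻¹' {x}) (fun n => inter_subset_inter_left _ (hA n.le_succ))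
    (fun n => hI n hx) (hA0.inter_right (isClosed_singleton.preimage hf))
    (fun n => (hcl n).inter (isClosed_singleton.preimage hf))
  exact ⟨p, mem_iInter.2 fun n => (mem_iInter.1 hp n).1, (mem_iInter.1 hp 0).2⟩

theorem LipschitzWith.mapsTo_closedBall_self {Y : Type*} [PseudoMetricSpace Y] {g : Y → Y}
    {r : ℝ≥0} (hg : LipschitzWith r g) {c : Y} {B R : ℝ} (hc : dist (g c) c ≤ B)
    (hR : r * R + B ≤ R) : MapsTo g (closedBall c R) (closedBall c R) :=
  (hg.mapsTo_closedBall c R).mono_right (closedBall_subset_closedBall' (by linarith))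

section SkewProduct

variable {𝒜 X Y : Type*}

-- `skewImage D T S K` is the paper's `T̃(K)` for `T̃_α (x, y) = (T_α x, S_α x y)`.
def skewImage (D : 𝒜 → Set X) (T : 𝒜 → X → X) (S : 𝒜 → X → Y → Y) (K : Set (X × Y)) :
    Set (X × Y) :=
  ⋃ α, (fun p : X × Y => (T α p.1, S α p.1 p.2)) '' (K ∩ D α ×ˢ univ)

variable {D : 𝒜 → Set X} {T : 𝒜 → X → X} {S : 𝒜 → X → Y → Y}

theorem mem_skewImage {K : Set (X × Y)} {q : X × Y} :
    q ∈ skewImage D T S K ↔ ∃ α, ∃ p ∈ K, p.1 ∈ D α ∧ (T α p.1, S α p.1 p.2) = q := by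
  simp [skewImage, and_assoc]

theorem skewImage_mono : Monotone (skewImage D T S) := fun _ _ h =>
  iUnion_mono fun _ => image_mono (inter_subset_inter_left _ h)

theorem skewImage_subset_prod {K : Set (X × Y)} {I : Set X} {s : Set Y} (hK : K ⊆ I ×ˢ s)
    (hT : ∀ α, T α '' D α ⊆ I) (hS : ∀ α, ∀ x ∈ D α, MapsTo (S α x) s s) :
    skewImage D T S K ⊆ I ×ˢ s := by
  intro q hq
  obtain ⟨α, p, hpK, hpD, rfl⟩ := mem_skewImage.1 hq
  exact ⟨hT α (mem_image_of_mem _ hpD), hS α p.1 hpD (hK hpK).2⟩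

theorem subset_fst_image_skewImage {K : Set (X × Y)} {I : Set X} (hK : I ⊆ Prod.fst '' K)
    (hD : ∀ α, D α ⊆ I) (hT : I ⊆ ⋃ α, T α '' D α) : I ⊆ Prod.fst '' skewImage D T S K := by
  intro x hx
  obtain ⟨_, ⟨α, rfl⟩, z, hz, rfl⟩ := hT hx
  obtain ⟨p, hpK, rfl⟩ := hK (hD α hz)
  exact ⟨_, mem_skewImage.2 ⟨α, p, hpK, hz, rfl⟩, rfl⟩

section Contraction

variable [PseudoMetricSpace Y] {r : ℝ≥0} {δ : ℝ} {A B K : Set (X × Y)}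

theorem FiberwiseNear.map_skewImage (h : FiberwiseNear δ A B)
    (hS : ∀ α, ∀ x ∈ D α, LipschitzWith r (S α x)) :
    FiberwiseNear (r * δ) (skewImage D T S A) (skewImage D T S B) := by
  intro q hq
  obtain ⟨α, p, hpA, hpD, rfl⟩ := mem_skewImage.1 hq
  obtain ⟨y, hyB, hy⟩ := h p hpA
  exact ⟨S α p.1 y, mem_skewImage.2 ⟨α, (p.1, y), hyB, hpD, rfl⟩,
    ((hS α p.1 hpD).dist_le_mul _ _).trans (by gcongr)⟩

variable [TopologicalSpace X] [T2Space X]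

theorem FiberwiseNear.map_closure_skewImage (h : FiberwiseNear δ A B)
    (hS : ∀ α, ∀ x ∈ D α, LipschitzWith r (S α x)) (hB : IsCompact (closure (skewImage D T S B))) :
    FiberwiseNear (r * δ) (closure (skewImage D T S A)) (closure (skewImage D T S B)) :=
  ((h.map_skewImage hS).mono subset_rfl subset_closure le_rfl).closure_left hB

theorem FiberwiseNear.iterate_closure_skewImage (h : FiberwiseNear δ A B)
    (hS : ∀ α, ∀ x ∈ D α, LipschitzWith r (S α x)) (hB : IsCompact B)
    (hBinv : closure (skewImage D T S B) ⊆ B) (n : ℕ) :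
    FiberwiseNear (r ^ n * δ) ((closure ∘ skewImage D T S)^[n] A) B := by
  induction n with
  | zero => simpa using h
  | succ n ih =>
    rw [iterate_succ_apply', pow_succ', mul_assoc]
    exact (ih.map_closure_skewImage hS (hB.of_isClosed_subset isClosed_closure hBinv)).mono
      subset_rfl hBinv le_rfl

theorem subset_closure_skewImage_of_fiberwiseNear (hS : ∀ α, ∀ x ∈ D α, LipschitzWith r (S α x))
    (hr : r < 1) (hK : IsCompact K) (hKinv : closure (skewImage D T S K) ⊆ K)
    (hA : FiberwiseNear δ A K) (hKA : ∀ n, K ⊆ (closure ∘ skewImage D T S)^[n] A) :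
    K ⊆ closure (skewImage D T S K) := by
  refine subset_of_forall_fiberwiseNear_pow isClosed_closure r.coe_nonneg hr (c := r * δ)
    fun n => ?_
  have := (hA.iterate_closure_skewImage hS hK hKinv n).map_closure_skewImage hS
    (hK.of_isClosed_subset isClosed_closure hKinv)
  exact this.mono ((hKA (n + 1)).trans_eq (iterate_succ_apply' _ _ _)) subset_rfl
    (le_of_eq (by ring))

end Contraction

section Attractor

variable [TopologicalSpace X] [T2Space X] [MetricSpace Y] {r : ℝ≥0}

theorem subset_of_closure_skewImage_eq (hS : ∀ α, ∀ x ∈ D α, LipschitzWith r (S α x))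
    (hr : r < 1) {K₁ K₂ : Set (X × Y)} (h₁ : IsCompact K₁) (h₂ : IsCompact K₂)
    (hfst : Prod.fst '' K₁ ⊆ Prod.fst '' K₂) (hK₁ : closure (skewImage D T S K₁) = K₁)
    (hK₂ : closure (skewImage D T S K₂) = K₂) : K₁ ⊆ K₂ := by
  have hbdd : Bornology.IsBounded (Prod.snd '' (K₁ ∪ K₂)) :=
    ((h₁.union h₂).image continuous_snd).isBounded
  have hnear : FiberwiseNear (diam (Prod.snd '' (K₁ ∪ K₂))) K₁ K₂ :=
    fiberwiseNear_of_fst_image_subset hfst fun p hp q hq =>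
      dist_le_diam_of_mem hbdd (mem_image_of_mem _ (.inl hp)) (mem_image_of_mem _ (.inr hq))
  refine subset_of_forall_fiberwiseNear_pow h₂.isClosed r.coe_nonneg hr
    (c := diam (Prod.snd '' (K₁ ∪ K₂))) fun n => ?_
  simpa only [iterate_fixed (f := closure ∘ skewImage D T S) hK₁] using
    hnear.iterate_closure_skewImage hS h₂ hK₂.subset n

theorem exists_closure_skewImage_eq_of_closure_skewImage_subset
    (hS : ∀ α, ∀ x ∈ D α, LipschitzWith r (S α x)) (hr : r < 1) {I : Set X}
    (hD : ∀ α, D α ⊆ I) (hTI : I ⊆ ⋃ α, T α '' D α) {K₀ : Set (X × Y)} (hK₀ : IsCompact K₀)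
    (hK₀inv : closure (skewImage D T S K₀) ⊆ K₀) (hK₀fst : Prod.fst '' K₀ = I) :
    ∃ K, IsCompact K ∧ Prod.fst '' K = I ∧ closure (skewImage D T S K) = K := by
  set Φ := closure ∘ skewImage D T S
  have hΦmono : Monotone Φ := fun _ _ h => closure_mono (skewImage_mono h)
  have hanti : Antitone fun n => Φ^[n] K₀ := hΦmono.antitone_iterate_of_map_le hK₀inv
  have hcl : ∀ n, IsClosed (Φ^[n] K₀)
    | 0 => hK₀.isClosed
    | n + 1 => by rw [iterate_succ_apply']; exact isClosed_closure
  have hfst : ∀ n, I ⊆ Prod.fst '' Φ^[n] K₀ := by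
    intro n
    induction n with
    | zero => exact hK₀fst.ge
    | succ n ih =>
      rw [iterate_succ_apply']
      exact (subset_fst_image_skewImage ih hD hTI).trans (image_mono subset_closure)
  set K := ⋂ n, Φ^[n] K₀
  have hKK₀ : K ⊆ K₀ := iInter_subset _ 0
  have hKc : IsCompact K := hK₀.of_isClosed_subset (isClosed_iInter hcl) hKK₀
  have hKfst : Prod.fst '' K = I :=
    ((image_mono hKK₀).trans hK₀fst.le).antisymm
      (subset_image_iInter_of_antitone continuous_fst hanti hK₀ hcl hfst)
  have hKinv : Φ K ⊆ K := subset_iInter fun n =>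
    calc Φ K ⊆ Φ (Φ^[n] K₀) := hΦmono (iInter_subset _ n)
      _ = Φ^[n + 1] K₀ := (iterate_succ_apply' Φ n K₀).symm
      _ ⊆ Φ^[n] K₀ := hanti n.le_succ
  have hnear : FiberwiseNear (diam (Prod.snd '' K₀)) K₀ K :=
    fiberwiseNear_of_fst_image_subset (hK₀fst.trans hKfst.symm).le fun p hp q hq =>
      dist_le_diam_of_mem (hK₀.image continuous_snd).isBounded (mem_image_of_mem _ hp)
        (mem_image_of_mem _ (hKK₀ hq))
  exact ⟨K, hKc, hKfst, hKinv.antisymm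
    (subset_closure_skewImage_of_fiberwiseNear hS hr hKc hKinv hnear (iInter_subset _))⟩

theorem exists_closure_skewImage_eq [ProperSpace Y]
    (hS : ∀ α, ∀ x ∈ D α, LipschitzWith r (S α x)) (hr : r < 1) {I : Set X} (hI : IsCompact I)
    (hD : ∀ α, D α ⊆ I) (hT : ∀ α, T α '' D α ⊆ I) (hTI : I ⊆ ⋃ α, T α '' D α) {c : Y} {B : ℝ}
    (hSc : ∀ α, ∀ x ∈ D α, dist (S α x c) c ≤ B) :
    ∃ K, IsCompact K ∧ Prod.fst '' K = I ∧ closure (skewImage D T S K) = K := by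
  set R := max B 0 / (1 - r)
  have hr1 : (0 : ℝ) < 1 - r := sub_pos.2 hr
  have hRB : r * R + B ≤ R := by
    have : (1 - r) * R = max B 0 := mul_div_cancel₀ _ hr1.ne'
    nlinarith [le_max_left B 0]
  have hK₀ : IsCompact (I ×ˢ closedBall c R) := hI.prod (isCompact_closedBall c R)
  refine exists_closure_skewImage_eq_of_closure_skewImage_subset hS hr hD hTI hK₀
    (closure_minimal (skewImage_subset_prod subset_rfl hT fun α x hx =>
      (hS α x hx).mapsTo_closedBall_self (hSc α x hx) hRB) hK₀.isClosed)
    (fst_image_prod _ (nonempty_closedBall.2 (by positivity)))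

end Attractor

end SkewProduct

theorem stmt_6_general {d : ℕ} {𝒜 : Type*}
    (I : Set (EuclideanSpace ℝ (Fin d)))
    (hIcp : IsCompact I)
    (Iα : 𝒜 → Set (EuclideanSpace ℝ (Fin d)))
    (hsub : ∀ α, Iα α ⊆ I)
    (T : 𝒜 → EuclideanSpace ℝ (Fin d) → EuclideanSpace ℝ (Fin d))
    (T' : 𝒜 → EuclideanSpace ℝ (Fin d) →
      (EuclideanSpace ℝ (Fin d) →L[ℝ] EuclideanSpace ℝ (Fin d)))
    (hTim : ∀ α, T α '' Iα α ⊆ I)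
    (C : ℝ) (hC : 1 < C)
    (hexp : ∀ α, ∀ x ∈ Iα α, ∀ v : EuclideanSpace ℝ (Fin d), C * ‖v‖ ≤ ‖T' α x v‖)
    (hTcover : ⋃ α, T α '' Iα α = I)
    (W : 𝒜 → EuclideanSpace ℝ (Fin d) →
      (EuclideanSpace ℝ (Fin d) →L[ℝ] EuclideanSpace ℝ (Fin d)))
    (hW : ∀ α, ∀ x ∈ Iα α, ∀ y : EuclideanSpace ℝ (Fin d),
      ContinuousLinearMap.adjoint (T' α x) (W α x y) = y ∧
      W α x (ContinuousLinearMap.adjoint (T' α x) y) = y)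
    (f : 𝒜 → EuclideanSpace ℝ (Fin d) → EuclideanSpace ℝ (Fin d))
    (B : ℝ) (hfbd : ∀ α, ∀ x ∈ Iα α, ‖f α x‖ ≤ B) :
    ∃! K : Set (EuclideanSpace ℝ (Fin d) × EuclideanSpace ℝ (Fin d)),
      IsCompact K ∧ Prod.fst '' K = I ∧
      closure (⋃ α : 𝒜,
        (fun p : EuclideanSpace ℝ (Fin d) × EuclideanSpace ℝ (Fin d) =>
          (T α p.1, W α p.1 p.2 + f α p.1)) ''
        (K ∩ (Iα α ×ˢ (Set.univ : Set (EuclideanSpace ℝ (Fin d)))))) = K := by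
  have hC0 : 0 < C := one_pos.trans hC
  set r : ℝ≥0 := ⟨C⁻¹, inv_nonneg.2 hC0.le⟩
  have hr : r < 1 := by rw [← NNReal.coe_lt_coe]; exact inv_lt_one_of_one_lt₀ hC
  have hS : ∀ α, ∀ x ∈ Iα α, LipschitzWith r (fun y => W α x y + f α x) := fun α x hx =>
    LipschitzWith.of_dist_le_mul fun y y' => by
      rw [dist_add_right, dist_eq_norm, dist_eq_norm, ← map_sub]
      exact (W α x).le_of_opNorm_le (ContinuousLinearMap.norm_le_inv_of_leftInverse_adjoint
        hC0 (hexp α x hx) fun y => (hW α x hx y).2) _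
  obtain ⟨K, hKc, hKfst, hK⟩ := exists_closure_skewImage_eq hS hr hIcp hsub hTim hTcover.ge
    (c := 0) (by simpa using hfbd)
  refine ⟨K, ⟨hKc, hKfst, hK⟩, fun K' ⟨hK'c, hK'fst, hK'⟩ => ?_⟩
  exact (subset_of_closure_skewImage_eq hS hr hK'c hKc (hK'fst.trans hKfst.symm).le hK' hK).antisymm
    (subset_of_closure_skewImage_eq hS hr hKc hK'c (hKfst.trans hK'fst.symm).le hK hK')

/-- Under the standard-form hypotheses (i')–(iii') — `I ⊆ ℝ^d` a
nonempty compact set equal to the closure of its interior; `{I_α}` a countable family of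
compact subsets of `I`, each the closure of its interior, covering `I`, with pairwise
intersections of Lebesgue measure zero; each `T_α : I_α → T_α(I_α) ⊆ I` a (C¹)
diffeomorphism whose Jacobian `T'_α(x)` expands uniformly by a constant `C > 1`, with
`⋃ T_α(I_α) = I`; `W α x = ((T'_α(x))ᵀ)⁻¹` the inverse of the transpose (adjoint) of the
Jacobian; and `f_α : I_α → ℝ^d` continuous and uniformly bounded — there exists a unique
compact set `K ⊆ I × ℝ^d` with `π(K) = I` such that the closure of
`T̃(K) = ⋃_α T̃_α(K ∩ (I_α × ℝ^d))` equals `K`, where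
`T̃_α(x, y) = (T_α x, W α x y + f_α x)`. -/
theorem stmt_6 {d : ℕ} {𝒜 : Type*} [Countable 𝒜]
    (I : Set (EuclideanSpace ℝ (Fin d)))
    (hIne : I.Nonempty) (hIcp : IsCompact I) (hIreg : I = closure (interior I))
    (Iα : 𝒜 → Set (EuclideanSpace ℝ (Fin d)))
    (hsub : ∀ α, Iα α ⊆ I) (hcp : ∀ α, IsCompact (Iα α))
    (hreg : ∀ α, Iα α = closure (interior (Iα α)))
    (hcover : ⋃ α, Iα α = I)
    (hnull : ∀ α β, α ≠ β → volume (Iα α ∩ Iα β) = 0)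
    (T : 𝒜 → EuclideanSpace ℝ (Fin d) → EuclideanSpace ℝ (Fin d))
    (T' : 𝒜 → EuclideanSpace ℝ (Fin d) →
      (EuclideanSpace ℝ (Fin d) →L[ℝ] EuclideanSpace ℝ (Fin d)))
    (hTinj : ∀ α, Set.InjOn (T α) (Iα α))
    (hTim : ∀ α, T α '' Iα α ⊆ I)
    (hTderiv : ∀ α, ∀ x ∈ Iα α, HasFDerivWithinAt (T α) (T' α x) (Iα α) x)
    (hT'cont : ∀ α, ContinuousOn (T' α) (Iα α))
    (C : ℝ) (hC : 1 < C)
    (hexp : ∀ α, ∀ x ∈ Iα α, ∀ v : EuclideanSpace ℝ (Fin d), C * ‖v‖ ≤ ‖T' α x v‖)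
    (hTcover : ⋃ α, T α '' Iα α = I)
    (W : 𝒜 → EuclideanSpace ℝ (Fin d) →
      (EuclideanSpace ℝ (Fin d) →L[ℝ] EuclideanSpace ℝ (Fin d)))
    (hW : ∀ α, ∀ x ∈ Iα α, ∀ y : EuclideanSpace ℝ (Fin d),
      ContinuousLinearMap.adjoint (T' α x) (W α x y) = y ∧
      W α x (ContinuousLinearMap.adjoint (T' α x) y) = y)
    (hWcont : ∀ α, ContinuousOn (W α) (Iα α))
    (f : 𝒜 → EuclideanSpace ℝ (Fin d) → EuclideanSpace ℝ (Fin d))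
    (hfcont : ∀ α, ContinuousOn (f α) (Iα α))
    (B : ℝ) (hfbd : ∀ α, ∀ x ∈ Iα α, ‖f α x‖ ≤ B) :
    ∃! K : Set (EuclideanSpace ℝ (Fin d) × EuclideanSpace ℝ (Fin d)),
      IsCompact K ∧ Prod.fst '' K = I ∧
      closure (⋃ α : 𝒜,
        (fun p : EuclideanSpace ℝ (Fin d) × EuclideanSpace ℝ (Fin d) =>
          (T α p.1, W α p.1 p.2 + f α p.1)) ''
        (K ∩ (Iα α ×ˢ (Set.univ : Set (EuclideanSpace ℝ (Fin d)))))) = K :=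
  stmt_6_general I hIcp Iα hsub T T' hTim C hC hexp hTcover W hW f B hfbd
end

section
/- Under the standard-form hypotheses (i')–(iii'), let K be the unique compact subset of I × ℝ^d with π(K) = I and closure(T̃(K)) = K, where T̃(K) := ⋃_{α∈𝒜} T̃_α(K_α) and K_α := K ∩ (I_α × ℝ^d). Assume the Lebesgue measure m(K) is strictly positive and m(K ∖ T̃(K)) = 0. Then the sets T̃_α(K_α), α ∈ 𝒜, are pairwise disjoint up to Lebesgue-null sets, and T̃ restricted to K is, up to null sets, a measure-preserving bijection of K with respect to Lebesgue measure: there exist subsets K', K'' ⊆ K of full Lebesgue measure in K such that T̃ maps K' bijectively onto K'' and preserves Lebesgue measure. -/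
/-!
Each branch `T̃_α (x, y) = (T_α x, W_α(x) y + f_α x)` is a skew product whose fibre maps have
determinant `det W_α(x) = 1 / det T'_α(x)`, because `W_α(x)` inverts the adjoint of `T'_α(x)`.
The change of variables formula in the base and Fubini then show that `T̃_α` preserves Lebesgue
measure on `I_α × ℝ^d`. Hence `∑ m(T̃_α(K_α)) = ∑ m(K_α) = m(K) = m(⋃ T̃_α(K_α)) < ∞`, which
forces the images to be pairwise disjoint up to null sets. After removing null sets from the
pieces `K_α` and from their images, both families are genuinely disjoint, and gluing the branches
over the pieces gives the measure-preserving bijection.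
-/

open MeasureTheory Set Function

theorem LinearMap.det_adjoint {E : Type*} [NormedAddCommGroup E] [InnerProductSpace ℝ E]
    [FiniteDimensional ℝ E] (L : E →ₗ[ℝ] E) : (LinearMap.adjoint L).det = L.det := by
  let b := stdOrthonormalBasis ℝ E
  rw [← LinearMap.det_toMatrix b.toBasis, ← LinearMap.det_toMatrix b.toBasis,
    LinearMap.toMatrix_adjoint b b, Matrix.det_conjTranspose, star_trivial]

theorem abs_det_mul_abs_det_eq_one_of_leftInverse_adjoint {E : Type*} [NormedAddCommGroup E]
    [InnerProductSpace ℝ E] [FiniteDimensional ℝ E] {L A : E →L[ℝ] E}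
    (h : LeftInverse (ContinuousLinearMap.adjoint L) A) : |L.det| * |A.det| = 1 := by
  have hcomp : (LinearMap.adjoint (L : E →ₗ[ℝ] E)).comp (A : E →ₗ[ℝ] E) = LinearMap.id :=
    LinearMap.ext h
  change |LinearMap.det (L : E →ₗ[ℝ] E)| * |LinearMap.det (A : E →ₗ[ℝ] E)| = 1
  rw [← abs_mul, ← LinearMap.det_adjoint, ← LinearMap.det_comp, hcomp, LinearMap.det_id, abs_one]

theorem measure_image_eq_of_forall_measurableSet {X Y : Type*} [MeasurableSpace X]
    [MeasurableSpace Y] {μ : Measure X} {ν : Measure Y} {g : X → Y} {D : Set X}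
    (hD : MeasurableSet D) (hg : Measurable (D.domRestrict g))
    (h : ∀ A ⊆ D, MeasurableSet A → ν (g '' A) = μ A) {A : Set X} (hA : A ⊆ D) :
    ν (g '' A) = μ A := by
  apply le_antisymm
  · calc ν (g '' A) ≤ ν (g '' (toMeasurable μ A ∩ D)) :=
          measure_mono (image_mono (subset_inter (subset_toMeasurable μ A) hA))
      _ = μ (toMeasurable μ A ∩ D) :=
          h _ inter_subset_right ((measurableSet_toMeasurable μ A).inter hD)
      _ ≤ μ A := (measure_mono inter_subset_left).trans_eq (measure_toMeasurable A)
  · have hpre : MeasurableSet (D ∩ g ⁻¹' toMeasurable ν (g '' A)) := by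
      rw [← Subtype.image_preimage_coe]
      exact hD.subtype_image (hg (measurableSet_toMeasurable ν _))
    calc μ A ≤ μ (D ∩ g ⁻¹' toMeasurable ν (g '' A)) :=
          measure_mono (subset_inter hA fun x hx => subset_toMeasurable ν _ (mem_image_of_mem g hx))
      _ = ν (g '' (D ∩ g ⁻¹' toMeasurable ν (g '' A))) := (h _ inter_subset_left hpre).symm
      _ ≤ ν (g '' A) := (measure_mono (image_subset_iff.2 inter_subset_right)).trans_eq
          (measure_toMeasurable _)

theorem aedisjoint_prod_univ {α β : Type*} [MeasurableSpace α] [MeasurableSpace β]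
    {μ : Measure α} {ν : Measure β} [SFinite ν] {s t : Set α} (h : AEDisjoint μ s t) :
    AEDisjoint (μ.prod ν) (s ×ˢ univ) (t ×ˢ univ) := by
  rw [AEDisjoint, prod_inter_prod, inter_univ, Measure.prod_prod, h.eq, zero_mul]

section SkewProduct

variable {E F : Type*} [NormedAddCommGroup F] [NormedSpace ℝ F]
  {T : E → E} {W : E → F →L[ℝ] F} {f : E → F} {S : Set E}

def skewProduct (T : E → E) (W : E → F →L[ℝ] F) (f : E → F) (p : E × F) : E × F :=
  (T p.1, W p.1 p.2 + f p.1)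

theorem injOn_skewProduct (hT : InjOn T S) (hW : ∀ x ∈ S, Injective (W x)) :
    InjOn (skewProduct T W f) (S ×ˢ univ) := by
  rintro ⟨x, y⟩ ⟨hx, -⟩ ⟨x', y'⟩ ⟨hx', -⟩ h
  simp only [skewProduct, Prod.mk.injEq] at h
  obtain rfl := hT hx hx' h.1
  rw [hW x hx (add_right_cancel h.2)]

theorem continuousOn_skewProduct [TopologicalSpace E] (hT : ContinuousOn T S)
    (hW : ContinuousOn W S) (hf : ContinuousOn f S) : ContinuousOn (skewProduct T W f) (S ×ˢ univ) :=
  (hT.comp continuousOn_fst fun _ hp => hp.1).prodMk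
    (((hW.comp continuousOn_fst fun _ hp => hp.1).clm_apply continuousOn_snd).add
      (hf.comp continuousOn_fst fun _ hp => hp.1))

theorem preimage_mk_skewProduct_image (hT : InjOn T S) {A : Set (E × F)}
    (hAS : A ⊆ S ×ˢ univ) {x : E} (hx : x ∈ S) :
    Prod.mk (T x) ⁻¹' (skewProduct T W f '' A) = (fun y => W x y + f x) '' (Prod.mk x ⁻¹' A) := by
  ext z
  constructor
  · rintro ⟨⟨x', y⟩, hA, hz⟩
    obtain ⟨hT', rfl⟩ := Prod.mk.inj hz
    obtain rfl := hT (hAS hA).1 hx hT'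
    exact ⟨y, hA, rfl⟩
  · rintro ⟨y, hA, rfl⟩
    exact ⟨(x, y), hA, rfl⟩

variable [NormedAddCommGroup E] [NormedSpace ℝ E] [FiniteDimensional ℝ E] [MeasurableSpace E]
  [BorelSpace E] [FiniteDimensional ℝ F] [MeasurableSpace F] [BorelSpace F]
  (μ : Measure E) [μ.IsAddHaarMeasure] (ν : Measure F) [ν.IsAddHaarMeasure]

theorem addHaar_image_continuousLinearMap_add (L : F →L[ℝ] F) (c : F) (B : Set F) :
    ν ((fun y => L y + c) '' B) = ENNReal.ofReal |L.det| * ν B := by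
  rw [show (fun y => L y + c) = (· + c) ∘ L from rfl, image_comp, image_add_right,
    measure_preimage_add_right, Measure.addHaar_image_continuousLinearMap]

theorem prod_skewProduct_image_of_measurableSet (hS : MeasurableSet S) {T' : E → E →L[ℝ] E}
    (hT' : ∀ x ∈ S, HasFDerivWithinAt T (T' x) S x) (hT : InjOn T S)
    (hdet : ∀ x ∈ S, |(T' x).det| * |(W x).det| = 1) {A : Set (E × F)}
    (hA : MeasurableSet A) (hAS : A ⊆ S ×ˢ univ)
    (hGA : MeasurableSet (skewProduct T W f '' A)) :
    μ.prod ν (skewProduct T W f '' A) = μ.prod ν A := by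
  have hsupp : support (fun x => ν (Prod.mk x ⁻¹' (skewProduct T W f '' A))) ⊆ T '' S := by
    intro x hx
    obtain ⟨y, ⟨p, hp, hpy⟩⟩ := nonempty_of_measure_ne_zero hx
    exact ⟨p.1, (hAS hp).1, congrArg Prod.fst hpy⟩
  have hsupp' : support (fun x => ν (Prod.mk x ⁻¹' A)) ⊆ S := fun x hx =>
    (hAS (nonempty_of_measure_ne_zero hx).some_mem).1
  calc μ.prod ν (skewProduct T W f '' A)
      = ∫⁻ x in T '' S, ν (Prod.mk x ⁻¹' (skewProduct T W f '' A)) ∂μ := by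
        rw [Measure.prod_apply hGA, setLIntegral_eq_of_support_subset hsupp]
    _ = ∫⁻ x in S, ENNReal.ofReal |(T' x).det|
          * ν (Prod.mk (T x) ⁻¹' (skewProduct T W f '' A)) ∂μ :=
        lintegral_image_eq_lintegral_abs_det_fderiv_mul μ hS hT' hT _
    _ = ∫⁻ x in S, ν (Prod.mk x ⁻¹' A) ∂μ := by
        refine setLIntegral_congr_fun hS fun x hx => ?_
        rw [preimage_mk_skewProduct_image hT hAS hx, addHaar_image_continuousLinearMap_add,
          ← mul_assoc, ← ENNReal.ofReal_mul (abs_nonneg _), hdet x hx, ENNReal.ofReal_one,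
          one_mul]
    _ = μ.prod ν A := by
        rw [setLIntegral_eq_of_support_subset hsupp', Measure.prod_apply hA]

theorem prod_skewProduct_image (hS : MeasurableSet S) {T' : E → E →L[ℝ] E}
    (hT' : ∀ x ∈ S, HasFDerivWithinAt T (T' x) S x) (hT : InjOn T S)
    (hW : ContinuousOn W S) (hWinj : ∀ x ∈ S, Injective (W x)) (hf : ContinuousOn f S)
    (hdet : ∀ x ∈ S, |(T' x).det| * |(W x).det| = 1) {A : Set (E × F)}
    (hAS : A ⊆ S ×ˢ univ) : μ.prod ν (skewProduct T W f '' A) = μ.prod ν A := by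
  have hcont := continuousOn_skewProduct (fun x hx => (hT' x hx).continuousWithinAt) hW hf
  have hinj := injOn_skewProduct (f := f) hT hWinj
  refine measure_image_eq_of_forall_measurableSet (hS.prod .univ)
    (continuousOn_iff_continuous_domRestrict.1 hcont).measurable (fun A' hA'S hA' => ?_) hAS
  exact prod_skewProduct_image_of_measurableSet μ ν hS hT' hT hdet hA' hA'S
    (hA'.image_of_continuousOn_injOn (hcont.mono hA'S) (hinj.mono hA'S))

end SkewProduct

section AEDisjointFamilies

variable {X ι : Type*} [MeasurableSpace X] [Countable ι] {μ : Measure X}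

theorem pairwise_aedisjoint_of_tsum_le_measure_iUnion {s : ι → Set X}
    (hs : ∀ i, MeasurableSet (s i)) (hfin : μ (⋃ i, s i) ≠ ⊤)
    (h : ∑' i, μ (s i) ≤ μ (⋃ i, s i)) : Pairwise (AEDisjoint μ on s) := by
  classical
  intro i j hij
  -- replacing `s j` by `s j \ s i` keeps the union but lowers the sum by `μ (s i ∩ s j)`
  set t := update s j (s j \ s i)
  have hunion : ⋃ k, t k = ⋃ k, s k := by
    refine (iUnion_mono fun k => ?_).antisymm (iUnion_subset fun k x hx => ?_)
    · by_cases hk : k = j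
      · subst hk; simp [t]
      · simp [t, hk]
    · by_cases hk : k = j
      · subst hk
        by_cases hxi : x ∈ s i
        · exact mem_iUnion.2 ⟨i, by simp [t, hij, hxi]⟩
        · exact mem_iUnion.2 ⟨k, by simp [t, hx, hxi]⟩
      · exact mem_iUnion.2 ⟨k, by simp [t, hk, hx]⟩
  have hsplit : ∀ k, μ (s k) = μ (t k) + (Pi.single j (μ (s i ∩ s j)) : ι → ENNReal) k := by
    intro k
    by_cases hk : k = j
    · subst hk
      simp only [t, update_self, Pi.single_eq_same]
      rw [inter_comm, measure_sdiff_add_inter _ (hs i)]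
    · simp [t, hk]
  have : μ (⋃ k, s k) + μ (s i ∩ s j) ≤ μ (⋃ k, s k) + 0 := calc
    μ (⋃ k, s k) + μ (s i ∩ s j) ≤ ∑' k, μ (t k) + μ (s i ∩ s j) := by
        rw [← hunion]; gcongr; exact measure_iUnion_le t
    _ = ∑' k, μ (s k) := by simp_rw [hsplit]; rw [ENNReal.tsum_add, tsum_pi_single]
    _ ≤ μ (⋃ k, s k) + 0 := by rwa [add_zero]
  exact le_zero_iff.1 (ENNReal.le_of_add_le_add_left hfin this)

theorem tsum_measure_inter_eq_of_subset_iUnion {D : ι → Set X} {K : Set X}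
    (hD : ∀ i, MeasurableSet (D i)) (hDdisj : Pairwise (AEDisjoint μ on D))
    (hK : MeasurableSet K) (hKD : K ⊆ ⋃ i, D i) : ∑' i, μ (K ∩ D i) = μ K := by
  rw [← measure_iUnion₀ (hDdisj.mono fun i j h => h.mono inter_subset_right inter_subset_right)
    fun i => (hK.inter (hD i)).nullMeasurableSet, ← inter_iUnion, inter_eq_left.2 hKD]

theorem measure_iUnion_of_subset_pairwise_disjoint {B Q : ι → Set X}
    (hQ : ∀ i, MeasurableSet (Q i)) (hQdisj : Pairwise (Disjoint on Q)) (hBQ : ∀ i, B i ⊆ Q i) :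
    μ (⋃ i, B i) = ∑' i, μ (B i) := by
  have hQB : ∀ i, Q i ∩ ⋃ j, B j = B i := by
    refine fun i => Subset.antisymm ?_ (subset_inter (hBQ i) (subset_iUnion B i))
    rintro x ⟨hxQ, hxB⟩
    obtain ⟨j, hj⟩ := mem_iUnion.1 hxB
    obtain rfl : i = j := hQdisj.eq (not_disjoint_iff.2 ⟨x, hxQ, hBQ j hj⟩)
    exact hj
  calc μ (⋃ i, B i) = μ.restrict (⋃ i, B i) (⋃ i, Q i) := by
        rw [Measure.restrict_apply (MeasurableSet.iUnion hQ), inter_eq_right.2 (iUnion_mono hBQ)]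
    _ = ∑' i, μ.restrict (⋃ i, B i) (Q i) := measure_iUnion hQdisj hQ
    _ = ∑' i, μ (B i) := tsum_congr fun i => by rw [Measure.restrict_apply (hQ i), hQB]

theorem pairwise_aedisjoint_image_inter {D : ι → Set X} {G : ι → X → X} {K : Set X}
    (hD : ∀ i, MeasurableSet (D i)) (hDdisj : Pairwise (AEDisjoint μ on D))
    (hG : ∀ i, ∀ A ⊆ D i, μ (G i '' A) = μ A) (hK : MeasurableSet K) (hKfin : μ K ≠ ⊤)
    (hKD : K ⊆ ⋃ i, D i) (hS : ∀ i, MeasurableSet (G i '' (K ∩ D i)))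
    (hSK : ⋃ i, G i '' (K ∩ D i) ⊆ K) (hKnull : μ (K \ ⋃ i, G i '' (K ∩ D i)) = 0) :
    Pairwise (AEDisjoint μ on fun i => G i '' (K ∩ D i)) := by
  have hunion : μ (⋃ i, G i '' (K ∩ D i)) = μ K := measure_eq_measure_of_null_sdiff hSK hKnull
  refine pairwise_aedisjoint_of_tsum_le_measure_iUnion hS (hunion ▸ hKfin) (le_of_eq ?_)
  rw [hunion, ← tsum_measure_inter_eq_of_subset_iUnion hD hDdisj hK hKD]
  exact tsum_congr fun i => hG i _ inter_subset_right

end AEDisjointFamilies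

section Piecewise

variable {X ι : Type*} {P Q : ι → Set X} {G : ι → X → X}

open Classical in
noncomputable def iPiecewise (P : ι → Set X) (G : ι → X → X) (x : X) : X :=
  if h : ∃ i, x ∈ P i then G h.choose x else x

theorem iPiecewise_eq_of_mem (hP : Pairwise (Disjoint on P)) {i : ι} {x : X} (hx : x ∈ P i) :
    iPiecewise P G x = G i x := by
  have h : ∃ j, x ∈ P j := ⟨i, hx⟩
  rw [iPiecewise, dif_pos h, hP.eq (not_disjoint_iff.2 ⟨x, h.choose_spec, hx⟩)]

theorem bijOn_iPiecewise (hP : Pairwise (Disjoint on P)) (hQ : Pairwise (Disjoint on Q))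
    (hG : ∀ i, InjOn (G i) (P i)) :
    BijOn (iPiecewise P G) (⋃ i, P i ∩ G i ⁻¹' Q i) (⋃ i, G i '' (P i ∩ G i ⁻¹' Q i)) := by
  refine ⟨fun x hx => ?_, fun x hx y hy hxy => ?_, fun z hz => ?_⟩
  · obtain ⟨i, hx⟩ := mem_iUnion.1 hx
    rw [iPiecewise_eq_of_mem hP hx.1]
    exact mem_iUnion.2 ⟨i, mem_image_of_mem _ hx⟩
  · obtain ⟨i, hx⟩ := mem_iUnion.1 hx
    obtain ⟨j, hy⟩ := mem_iUnion.1 hy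
    rw [iPiecewise_eq_of_mem hP hx.1, iPiecewise_eq_of_mem hP hy.1] at hxy
    obtain rfl : i = j := hQ.eq (not_disjoint_iff.2 ⟨G i x, hx.2, hxy ▸ hy.2⟩)
    exact hG i hx.1 hy.1 hxy
  · obtain ⟨i, x, hx, rfl⟩ := mem_iUnion.1 hz
    exact ⟨x, mem_iUnion.2 ⟨i, hx⟩, iPiecewise_eq_of_mem hP hx.1⟩

variable [MeasurableSpace X] [Countable ι] {μ : Measure X}

theorem measure_iPiecewise_image (hPm : ∀ i, MeasurableSet (P i))
    (hP : Pairwise (Disjoint on P)) (hQm : ∀ i, MeasurableSet (Q i))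
    (hQ : Pairwise (Disjoint on Q)) (hG : ∀ i, ∀ A ⊆ P i, μ (G i '' A) = μ A) {A : Set X}
    (hAm : MeasurableSet A) (hA : A ⊆ ⋃ i, P i ∩ G i ⁻¹' Q i) :
    μ (iPiecewise P G '' A) = μ A := by
  have hAP : ⋃ i, A ∩ P i = A :=
    (inter_iUnion A P).symm.trans
      (inter_eq_left.2 (hA.trans (iUnion_mono fun _ => inter_subset_left)))
  have hFA : iPiecewise P G '' A = ⋃ i, G i '' (A ∩ P i) := by
    conv_lhs => rw [← hAP]
    rw [image_iUnion]
    exact iUnion_congr fun i => image_congr fun x hx => iPiecewise_eq_of_mem hP hx.2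
  have hGQ : ∀ i, G i '' (A ∩ P i) ⊆ Q i := by
    rintro i _ ⟨x, ⟨hxA, hxP⟩, rfl⟩
    obtain ⟨j, hxj⟩ := mem_iUnion.1 (hA hxA)
    obtain rfl : i = j := hP.eq (not_disjoint_iff.2 ⟨x, hxP, hxj.1⟩)
    exact hxj.2
  calc μ (iPiecewise P G '' A) = ∑' i, μ (G i '' (A ∩ P i)) := by
        rw [hFA, measure_iUnion_of_subset_pairwise_disjoint hQm hQ hGQ]
    _ = ∑' i, μ (A ∩ P i) := tsum_congr fun i => hG i _ inter_subset_right
    _ = μ A := by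
        rw [← measure_iUnion (hP.mono fun i j h => h.mono inter_subset_right inter_subset_right)
          fun i => hAm.inter (hPm i), hAP]

end Piecewise

section InvariantSet

variable {X ι : Type*} [MeasurableSpace X] [Countable ι] {μ : Measure X}
  {D P Q : ι → Set X} {G : ι → X → X} {K : Set X}

theorem measure_diff_iUnion_inter_preimage_eq_zero (hG : ∀ i, ∀ A ⊆ D i, μ (G i '' A) = μ A)
    (hKD : K ⊆ ⋃ i, D i) (hPE : ∀ i, P i ⊆ K ∩ D i) (hEP : ∀ i, μ ((K ∩ D i) \ P i) = 0)
    (hSQ : ∀ i, μ (G i '' (K ∩ D i) \ Q i) = 0) :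
    μ (K \ ⋃ i, P i ∩ G i ⁻¹' Q i) = 0 := by
  refine measure_mono_null (t := ⋃ i, ((K ∩ D i) \ P i) ∪ (P i \ G i ⁻¹' Q i)) ?_
    (measure_iUnion_null fun i => measure_union_null (hEP i) ?_)
  · rintro x ⟨hxK, hx⟩
    obtain ⟨i, hxD⟩ := mem_iUnion.1 (hKD hxK)
    refine mem_iUnion.2 ⟨i, ?_⟩
    by_cases hxP : x ∈ P i
    · exact Or.inr ⟨hxP, fun hxQ => hx (mem_iUnion.2 ⟨i, hxP, hxQ⟩)⟩
    · exact Or.inl ⟨⟨hxK, hxD⟩, hxP⟩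
  · rw [← hG i _ (sdiff_subset.trans ((hPE i).trans inter_subset_right))]
    refine measure_mono_null ?_ (hSQ i)
    rintro _ ⟨x, ⟨hxP, hxQ⟩, rfl⟩
    exact ⟨mem_image_of_mem _ (hPE i hxP), hxQ⟩

theorem measure_diff_iUnion_image_inter_preimage_eq_zero
    (hG : ∀ i, ∀ A ⊆ D i, μ (G i '' A) = μ A) (hEP : ∀ i, μ ((K ∩ D i) \ P i) = 0)
    (hSQ : ∀ i, μ (G i '' (K ∩ D i) \ Q i) = 0) (hKnull : μ (K \ ⋃ i, G i '' (K ∩ D i)) = 0) :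
    μ (K \ ⋃ i, G i '' (P i ∩ G i ⁻¹' Q i)) = 0 := by
  refine measure_mono_null (t := (K \ ⋃ i, G i '' (K ∩ D i)) ∪
      ⋃ i, (G i '' (K ∩ D i) \ Q i) ∪ G i '' ((K ∩ D i) \ P i)) ?_
    (measure_union_null hKnull (measure_iUnion_null fun i => measure_union_null (hSQ i) ?_))
  · rintro z ⟨hzK, hz⟩
    by_cases hzS : z ∈ ⋃ i, G i '' (K ∩ D i)
    · obtain ⟨i, x, hxE, rfl⟩ := mem_iUnion.1 hzS
      refine Or.inr (mem_iUnion.2 ⟨i, ?_⟩)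
      by_cases hxP : x ∈ P i
      · exact Or.inl ⟨mem_image_of_mem _ hxE, fun hQ => hz (mem_iUnion.2 ⟨i, x, ⟨hxP, hQ⟩, rfl⟩)⟩
      · exact Or.inr (mem_image_of_mem _ ⟨hxE, hxP⟩)
    · exact Or.inl ⟨hzK, hzS⟩
  · rw [hG i _ (sdiff_subset.trans inter_subset_right)]
    exact hEP i

theorem exists_bijOn_measure_image_eq (hD : ∀ i, MeasurableSet (D i))
    (hDdisj : Pairwise (AEDisjoint μ on D)) (hGinj : ∀ i, InjOn (G i) (D i))
    (hG : ∀ i, ∀ A ⊆ D i, μ (G i '' A) = μ A) (hK : MeasurableSet K) (hKfin : μ K ≠ ⊤)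
    (hKD : K ⊆ ⋃ i, D i) (hS : ∀ i, MeasurableSet (G i '' (K ∩ D i)))
    (hSK : ⋃ i, G i '' (K ∩ D i) ⊆ K) (hKnull : μ (K \ ⋃ i, G i '' (K ∩ D i)) = 0) :
    Pairwise (AEDisjoint μ on fun i => G i '' (K ∩ D i)) ∧
    ∃ K' K'' : Set X, K' ⊆ K ∧ K'' ⊆ K ∧ μ (K \ K') = 0 ∧ μ (K \ K'') = 0 ∧
      ∃ F : X → X, (∀ x ∈ K', ∃ i, x ∈ D i ∧ F x = G i x) ∧ BijOn F K' K'' ∧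
        ∀ A ⊆ K', MeasurableSet A → μ (F '' A) = μ A := by
  obtain ⟨P, hPE, hPae, hPm, hPdisj⟩ := exists_subordinate_pairwise_disjoint
    (fun i => (hK.inter (hD i)).nullMeasurableSet)
    (hDdisj.mono fun i j h => h.mono inter_subset_right inter_subset_right)
  have hSdisj := pairwise_aedisjoint_image_inter hD hDdisj hG hK hKfin hKD hS hSK hKnull
  obtain ⟨Q, -, hQae, hQm, hQdisj⟩ :=
    exists_subordinate_pairwise_disjoint (fun i => (hS i).nullMeasurableSet) hSdisj
  have hPD : ∀ i, P i ⊆ D i := fun i => (hPE i).trans inter_subset_right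
  have hEP : ∀ i, μ ((K ∩ D i) \ P i) = 0 := fun i => (ae_eq_set.1 (hPae i)).1
  have hSQ : ∀ i, μ (G i '' (K ∩ D i) \ Q i) = 0 := fun i => (ae_eq_set.1 (hQae i)).1
  refine ⟨hSdisj, ⋃ i, P i ∩ G i ⁻¹' Q i, ⋃ i, G i '' (P i ∩ G i ⁻¹' Q i),
    iUnion_subset fun i => inter_subset_left.trans ((hPE i).trans inter_subset_left),
    (iUnion_mono fun i => image_mono (inter_subset_left.trans (hPE i))).trans hSK,
    measure_diff_iUnion_inter_preimage_eq_zero hG hKD hPE hEP hSQ,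
    measure_diff_iUnion_image_inter_preimage_eq_zero hG hEP hSQ hKnull,
    iPiecewise P G, fun x hx => ?_, bijOn_iPiecewise hPdisj hQdisj fun i => (hGinj i).mono (hPD i),
    fun A hA hAm => measure_iPiecewise_image hPm hPdisj hQm hQdisj
      (fun i A hA => hG i A (hA.trans (hPD i))) hAm hA⟩
  obtain ⟨i, hx⟩ := mem_iUnion.1 hx
  exact ⟨i, hPD i hx.1, iPiecewise_eq_of_mem hPdisj hx.1⟩

end InvariantSet

theorem stmt_8_general {d : ℕ} {𝒜 : Type*} [Countable 𝒜]
    (I : Set (EuclideanSpace ℝ (Fin d)))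
    (Iα : 𝒜 → Set (EuclideanSpace ℝ (Fin d)))
    (hcp : ∀ α, IsCompact (Iα α))
    (hcover : ⋃ α, Iα α = I)
    (hnull : ∀ α β, α ≠ β → volume (Iα α ∩ Iα β) = 0)
    (T : 𝒜 → EuclideanSpace ℝ (Fin d) → EuclideanSpace ℝ (Fin d))
    (T' : 𝒜 → EuclideanSpace ℝ (Fin d) →
      (EuclideanSpace ℝ (Fin d) →L[ℝ] EuclideanSpace ℝ (Fin d)))
    (hTinj : ∀ α, Set.InjOn (T α) (Iα α))
    (hTderiv : ∀ α, ∀ x ∈ Iα α, HasFDerivWithinAt (T α) (T' α x) (Iα α) x)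
    (W : 𝒜 → EuclideanSpace ℝ (Fin d) →
      (EuclideanSpace ℝ (Fin d) →L[ℝ] EuclideanSpace ℝ (Fin d)))
    (hW : ∀ α, ∀ x ∈ Iα α, ∀ y : EuclideanSpace ℝ (Fin d),
      ContinuousLinearMap.adjoint (T' α x) (W α x y) = y ∧
      W α x (ContinuousLinearMap.adjoint (T' α x) y) = y)
    (hWcont : ∀ α, ContinuousOn (W α) (Iα α))
    (f : 𝒜 → EuclideanSpace ℝ (Fin d) → EuclideanSpace ℝ (Fin d))
    (hfcont : ∀ α, ContinuousOn (f α) (Iα α))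
    -- the invariant compact set K
    (K : Set (EuclideanSpace ℝ (Fin d) × EuclideanSpace ℝ (Fin d)))
    (hKcp : IsCompact K) (hKπ : Prod.fst '' K = I)
    (hKfix : closure (⋃ α : 𝒜,
      (fun p : EuclideanSpace ℝ (Fin d) × EuclideanSpace ℝ (Fin d) =>
        (T α p.1, W α p.1 p.2 + f α p.1)) ''
      (K ∩ (Iα α ×ˢ (Set.univ : Set (EuclideanSpace ℝ (Fin d)))))) = K)
    (hKnull : volume (K \ ⋃ α : 𝒜,
      (fun p : EuclideanSpace ℝ (Fin d) × EuclideanSpace ℝ (Fin d) =>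
        (T α p.1, W α p.1 p.2 + f α p.1)) ''
      (K ∩ (Iα α ×ˢ (Set.univ : Set (EuclideanSpace ℝ (Fin d)))))) = 0) :
    -- the images of the pieces are pairwise disjoint in measure
    (∀ α β, α ≠ β →
      volume
        (((fun p : EuclideanSpace ℝ (Fin d) × EuclideanSpace ℝ (Fin d) =>
            (T α p.1, W α p.1 p.2 + f α p.1)) ''
          (K ∩ (Iα α ×ˢ (Set.univ : Set (EuclideanSpace ℝ (Fin d)))))) ∩
         ((fun p : EuclideanSpace ℝ (Fin d) × EuclideanSpace ℝ (Fin d) =>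
            (T β p.1, W β p.1 p.2 + f β p.1)) ''
          (K ∩ (Iα β ×ˢ (Set.univ : Set (EuclideanSpace ℝ (Fin d))))))) = 0) ∧
    -- T̃ is, up to null sets, a Lebesgue-measure-preserving bijection of K
    ∃ K' K'' : Set (EuclideanSpace ℝ (Fin d) × EuclideanSpace ℝ (Fin d)),
      K' ⊆ K ∧ K'' ⊆ K ∧ volume (K \ K') = 0 ∧ volume (K \ K'') = 0 ∧
      ∃ F : EuclideanSpace ℝ (Fin d) × EuclideanSpace ℝ (Fin d) →
            EuclideanSpace ℝ (Fin d) × EuclideanSpace ℝ (Fin d),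
        (∀ p ∈ K', ∃ α, p.1 ∈ Iα α ∧ F p = (T α p.1, W α p.1 p.2 + f α p.1)) ∧
        Set.BijOn F K' K'' ∧
        (∀ A : Set (EuclideanSpace ℝ (Fin d) × EuclideanSpace ℝ (Fin d)),
          A ⊆ K' → MeasurableSet A → volume (F '' A) = volume A) := by
  have hD : ∀ α, MeasurableSet (Iα α ×ˢ (univ : Set (EuclideanSpace ℝ (Fin d)))) :=
    fun α => (hcp α).measurableSet.prod .univ
  have hWinv : ∀ α, ∀ x ∈ Iα α, LeftInverse (ContinuousLinearMap.adjoint (T' α x)) (W α x) :=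
    fun α x hx y => (hW α x hx y).1
  have hGcont : ∀ α, ContinuousOn (skewProduct (T α) (W α) (f α)) (Iα α ×ˢ univ) := fun α =>
    continuousOn_skewProduct (fun x hx => (hTderiv α x hx).continuousWithinAt) (hWcont α)
      (hfcont α)
  have hG : ∀ α, ∀ A ⊆ Iα α ×ˢ univ, volume (skewProduct (T α) (W α) (f α) '' A) = volume A :=
    fun α A hA => prod_skewProduct_image volume volume (hcp α).measurableSet (hTderiv α)
      (hTinj α) (hWcont α) (fun x hx => (hWinv α x hx).injective) (hfcont α)
      (fun x hx => abs_det_mul_abs_det_eq_one_of_leftInverse_adjoint (hWinv α x hx)) hA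
  have hKD : K ⊆ ⋃ α, Iα α ×ˢ univ := fun p hp => by
    obtain ⟨α, hα⟩ := mem_iUnion.1 (hcover.symm ▸ hKπ ▸ mem_image_of_mem Prod.fst hp)
    exact mem_iUnion.2 ⟨α, hα, trivial⟩
  have hS : ∀ α, MeasurableSet (skewProduct (T α) (W α) (f α) '' (K ∩ Iα α ×ˢ univ)) := fun α =>
    ((hKcp.inter_right ((hcp α).isClosed.prod isClosed_univ)).image_of_continuousOn
      ((hGcont α).mono inter_subset_right)).measurableSet
  obtain ⟨hSdisj, K', K'', hK', hK'', hKK', hKK'', F, hFG, hF, hFμ⟩ :=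
    exists_bijOn_measure_image_eq hD (fun α β hαβ => aedisjoint_prod_univ (hnull α β hαβ))
      (fun α => injOn_skewProduct (hTinj α) fun x hx => (hWinv α x hx).injective) hG
      hKcp.measurableSet hKcp.measure_lt_top.ne hKD hS (subset_closure.trans hKfix.subset) hKnull
  refine ⟨fun α β hαβ => hSdisj hαβ, K', K'', hK', hK'', hKK', hKK'', F, fun p hp => ?_, hF, hFμ⟩
  obtain ⟨α, hα, hFα⟩ := hFG p hp
  exact ⟨α, hα.1, hFα⟩

/-- Under the standard-form hypotheses (i')–(iii'), let `K` be the
compact subset of `I × ℝ^d` with `π(K) = I` and `closure(T̃(K)) = K`, where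
`T̃(K) = ⋃_α T̃_α(K_α)` and `K_α = K ∩ (I_α × ℝ^d)`.  Assume `m(K) > 0` and
`m(K ∖ T̃(K)) = 0`.  Then the sets `T̃_α(K_α)` are pairwise disjoint up to Lebesgue-null
sets, and `T̃` restricted to `K` is, up to null sets, a measure-preserving bijection of
`K`: there are full-measure subsets `K', K'' ⊆ K` and a map `F` agreeing on `K'` with
some branch `T̃_α` at each point, mapping `K'` bijectively onto `K''`, and preserving
Lebesgue measure. -/
theorem stmt_8 {d : ℕ} {𝒜 : Type*} [Countable 𝒜]
    (I : Set (EuclideanSpace ℝ (Fin d)))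
    (hIne : I.Nonempty) (hIcp : IsCompact I) (hIreg : I = closure (interior I))
    (Iα : 𝒜 → Set (EuclideanSpace ℝ (Fin d)))
    (hsub : ∀ α, Iα α ⊆ I) (hcp : ∀ α, IsCompact (Iα α))
    (hreg : ∀ α, Iα α = closure (interior (Iα α)))
    (hcover : ⋃ α, Iα α = I)
    (hnull : ∀ α β, α ≠ β → volume (Iα α ∩ Iα β) = 0)
    (T : 𝒜 → EuclideanSpace ℝ (Fin d) → EuclideanSpace ℝ (Fin d))
    (T' : 𝒜 → EuclideanSpace ℝ (Fin d) →
      (EuclideanSpace ℝ (Fin d) →L[ℝ] EuclideanSpace ℝ (Fin d)))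
    (hTinj : ∀ α, Set.InjOn (T α) (Iα α))
    (hTim : ∀ α, T α '' Iα α ⊆ I)
    (hTderiv : ∀ α, ∀ x ∈ Iα α, HasFDerivWithinAt (T α) (T' α x) (Iα α) x)
    (hT'cont : ∀ α, ContinuousOn (T' α) (Iα α))
    (C : ℝ) (hC : 1 < C)
    (hexp : ∀ α, ∀ x ∈ Iα α, ∀ v : EuclideanSpace ℝ (Fin d), C * ‖v‖ ≤ ‖T' α x v‖)
    (hTcover : ⋃ α, T α '' Iα α = I)
    (W : 𝒜 → EuclideanSpace ℝ (Fin d) →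
      (EuclideanSpace ℝ (Fin d) →L[ℝ] EuclideanSpace ℝ (Fin d)))
    (hW : ∀ α, ∀ x ∈ Iα α, ∀ y : EuclideanSpace ℝ (Fin d),
      ContinuousLinearMap.adjoint (T' α x) (W α x y) = y ∧
      W α x (ContinuousLinearMap.adjoint (T' α x) y) = y)
    (hWcont : ∀ α, ContinuousOn (W α) (Iα α))
    (f : 𝒜 → EuclideanSpace ℝ (Fin d) → EuclideanSpace ℝ (Fin d))
    (hfcont : ∀ α, ContinuousOn (f α) (Iα α))
    (B : ℝ) (hfbd : ∀ α, ∀ x ∈ Iα α, ‖f α x‖ ≤ B)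
    -- the invariant compact set K
    (K : Set (EuclideanSpace ℝ (Fin d) × EuclideanSpace ℝ (Fin d)))
    (hKcp : IsCompact K) (hKπ : Prod.fst '' K = I)
    (hKfix : closure (⋃ α : 𝒜,
      (fun p : EuclideanSpace ℝ (Fin d) × EuclideanSpace ℝ (Fin d) =>
        (T α p.1, W α p.1 p.2 + f α p.1)) ''
      (K ∩ (Iα α ×ˢ (Set.univ : Set (EuclideanSpace ℝ (Fin d)))))) = K)
    (hKpos : 0 < volume K)
    (hKnull : volume (K \ ⋃ α : 𝒜,
      (fun p : EuclideanSpace ℝ (Fin d) × EuclideanSpace ℝ (Fin d) =>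
        (T α p.1, W α p.1 p.2 + f α p.1)) ''
      (K ∩ (Iα α ×ˢ (Set.univ : Set (EuclideanSpace ℝ (Fin d)))))) = 0) :
    -- the images of the pieces are pairwise disjoint in measure
    (∀ α β, α ≠ β →
      volume
        (((fun p : EuclideanSpace ℝ (Fin d) × EuclideanSpace ℝ (Fin d) =>
            (T α p.1, W α p.1 p.2 + f α p.1)) ''
          (K ∩ (Iα α ×ˢ (Set.univ : Set (EuclideanSpace ℝ (Fin d)))))) ∩
         ((fun p : EuclideanSpace ℝ (Fin d) × EuclideanSpace ℝ (Fin d) =>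
            (T β p.1, W β p.1 p.2 + f β p.1)) ''
          (K ∩ (Iα β ×ˢ (Set.univ : Set (EuclideanSpace ℝ (Fin d))))))) = 0) ∧
    -- T̃ is, up to null sets, a Lebesgue-measure-preserving bijection of K
    ∃ K' K'' : Set (EuclideanSpace ℝ (Fin d) × EuclideanSpace ℝ (Fin d)),
      K' ⊆ K ∧ K'' ⊆ K ∧ volume (K \ K') = 0 ∧ volume (K \ K'') = 0 ∧
      ∃ F : EuclideanSpace ℝ (Fin d) × EuclideanSpace ℝ (Fin d) →
            EuclideanSpace ℝ (Fin d) × EuclideanSpace ℝ (Fin d),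
        (∀ p ∈ K', ∃ α, p.1 ∈ Iα α ∧ F p = (T α p.1, W α p.1 p.2 + f α p.1)) ∧
        Set.BijOn F K' K'' ∧
        (∀ A : Set (EuclideanSpace ℝ (Fin d) × EuclideanSpace ℝ (Fin d)),
          A ⊆ K' → MeasurableSet A → volume (F '' A) = volume A) :=
  stmt_8_general I Iα hcp hcover hnull T T' hTinj hTderiv W hW hWcont f hfcont K hKcp hKπ hKfix
    hKnull
end

section
/- Under the standard-form hypotheses (i')–(iii'), let K be a compact subset of I × ℝ^d. Suppose (x_n, y_n)_{n∈ℤ} and (x_n, y'_n)_{n∈ℤ} are two bi-infinite sequences of points of K with the same first coordinates, and (α_n)_{n∈ℤ} is a sequence of indices with x_n ∈ I_{α_n} such that for every n ∈ ℤ, T̃_{α_n}(x_n, y_n) = (x_{n+1}, y_{n+1}) and T̃_{α_n}(x_n, y'_n) = (x_{n+1}, y'_{n+1}). Then y_n = y'_n for all n ∈ ℤ. (Proof idea: each fiber map y ↦ ((T'_α(x))^T)^{-1}·y + f_α(x) contracts distances by at least the factor 1/C, so ‖y_n − y'_n‖ ≥ C‖y_{n+1} − y'_{n+1}‖; if y_0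 ≠ y'_0 then ‖y_n − y'_n‖ → ∞ as n → −∞, contradicting compactness of K.) -/
open MeasureTheory

/- The fibre maps `y ↦ W y + f` have linear part `W = ((T')ᵀ)⁻¹`, which contracts by `1/C`
because `T'` expands by `C`. Two orbits in the same fibres therefore have a difference that
grows at least like `Cᵐ` going `m` steps into the past, which is impossible inside the
bounded set `K` unless the difference vanishes. -/

/-- Writing `u = A v` (finite dimension makes `A` onto),
`‖u‖² = ⟪A† u, v⟫ ≤ ‖A† u‖ ‖v‖ ≤ ‖A† u‖ ‖u‖ / C`. -/
theorem ContinuousLinearMap.mul_norm_le_norm_adjoint_apply {E : Type*} [NormedAddCommGroup E]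
    [InnerProductSpace ℝ E] [FiniteDimensional ℝ E] {A : E →L[ℝ] E} {C : ℝ}
    (hA : ∀ v, C * ‖v‖ ≤ ‖A v‖) (u : E) : C * ‖u‖ ≤ ‖adjoint A u‖ := by
  rcases le_or_gt C 0 with hC | hC
  · exact (mul_nonpos_of_nonpos_of_nonneg hC (norm_nonneg u)).trans (norm_nonneg _)
  have hinj : Function.Injective (A : E →ₗ[ℝ] E) := by
    refine (injective_iff_map_eq_zero _).2 fun v hv => norm_le_zero_iff.1 ?_
    have := hA v
    rw [show A v = 0 from hv, norm_zero] at this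
    exact nonpos_of_mul_nonpos_right this hC
  obtain ⟨v, rfl⟩ : ∃ v, A v = u := LinearMap.injective_iff_surjective.1 hinj u
  have hsq : ‖A v‖ ^ 2 ≤ ‖adjoint A (A v)‖ * ‖v‖ := by
    rw [← real_inner_self_eq_norm_sq, ← adjoint_inner_left]
    exact real_inner_le_norm _ _
  rcases (norm_nonneg (A v)).eq_or_lt with h0 | hpos
  · rw [← h0, mul_zero]; exact norm_nonneg _
  refine le_of_mul_le_mul_right ?_ hpos
  nlinarith [mul_le_mul_of_nonneg_left (hA v) (norm_nonneg (adjoint A (A v)))]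

theorem eq_zero_of_mul_le_pred_of_bounded {u : ℤ → ℝ} {C M : ℝ} (hC : 1 < C)
    (hu : ∀ n, 0 ≤ u n) (huM : ∀ n, u n ≤ M) (hstep : ∀ n, C * u (n + 1) ≤ u n) (n : ℤ) :
    u n = 0 := by
  have hpast : ∀ m : ℕ, C ^ m * u n ≤ u (n - m) := by
    intro m
    induction m with
    | zero => simp
    | succ m ih =>
      have hs := hstep (n - (m + 1 : ℕ))
      rw [show n - (m + 1 : ℕ) + 1 = n - m by push_cast; ring] at hs
      calc C ^ (m + 1) * u n = C * (C ^ m * u n) := by ring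
        _ ≤ C * u (n - m) := by gcongr
        _ ≤ _ := hs
  refine le_antisymm (not_lt.1 fun hpos => ?_) (hu n)
  obtain ⟨m, hm⟩ := pow_unbounded_of_one_lt (M / u n) hC
  rw [div_lt_iff₀ hpos] at hm
  linarith [hpast m, huM (n - m)]

theorem stmt_9_general {d : ℕ} {𝒜 : Type*}
    (Iα : 𝒜 → Set (EuclideanSpace ℝ (Fin d)))
    (T : 𝒜 → EuclideanSpace ℝ (Fin d) → EuclideanSpace ℝ (Fin d))
    (T' : 𝒜 → EuclideanSpace ℝ (Fin d) →
      (EuclideanSpace ℝ (Fin d) →L[ℝ] EuclideanSpace ℝ (Fin d)))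
    (C : ℝ) (hC : 1 < C)
    (hexp : ∀ α, ∀ x ∈ Iα α, ∀ v : EuclideanSpace ℝ (Fin d), C * ‖v‖ ≤ ‖T' α x v‖)
    (W : 𝒜 → EuclideanSpace ℝ (Fin d) →
      (EuclideanSpace ℝ (Fin d) →L[ℝ] EuclideanSpace ℝ (Fin d)))
    (hW : ∀ α, ∀ x ∈ Iα α, ∀ y : EuclideanSpace ℝ (Fin d),
      ContinuousLinearMap.adjoint (T' α x) (W α x y) = y ∧
      W α x (ContinuousLinearMap.adjoint (T' α x) y) = y)
    (f : 𝒜 → EuclideanSpace ℝ (Fin d) → EuclideanSpace ℝ (Fin d))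
    (K : Set (EuclideanSpace ℝ (Fin d) × EuclideanSpace ℝ (Fin d)))
    (hKcp : IsCompact K)
    (x y y' : ℤ → EuclideanSpace ℝ (Fin d)) (αseq : ℤ → 𝒜)
    (hxy : ∀ n : ℤ, (x n, y n) ∈ K) (hxy' : ∀ n : ℤ, (x n, y' n) ∈ K)
    (hxα : ∀ n : ℤ, x n ∈ Iα (αseq n))
    (hrec : ∀ n : ℤ,
      (T (αseq n) (x n), W (αseq n) (x n) (y n) + f (αseq n) (x n))
        = (x (n + 1), y (n + 1)))
    (hrec' : ∀ n : ℤ,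
      (T (αseq n) (x n), W (αseq n) (x n) (y' n) + f (αseq n) (x n))
        = (x (n + 1), y' (n + 1))) :
    ∀ n : ℤ, y n = y' n := by
  obtain ⟨M, hM⟩ := Metric.isBounded_iff.1 (hKcp.image continuous_snd).isBounded
  have hbound : ∀ n, ‖y n - y' n‖ ≤ M := fun n =>
    dist_eq_norm (y n) (y' n) ▸ hM ⟨_, hxy n, rfl⟩ ⟨_, hxy' n, rfl⟩
  have hstep : ∀ n, C * ‖y (n + 1) - y' (n + 1)‖ ≤ ‖y n - y' n‖ := by
    intro n
    have hdiff : y (n + 1) - y' (n + 1) = W (αseq n) (x n) (y n - y' n) := by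
      rw [← (Prod.mk.inj (hrec n)).2, ← (Prod.mk.inj (hrec' n)).2, map_sub]
      abel
    simpa [hdiff, (hW _ _ (hxα n) _).1] using
      ContinuousLinearMap.mul_norm_le_norm_adjoint_apply (hexp _ _ (hxα n)) (y (n + 1) - y' (n + 1))
  intro n
  exact sub_eq_zero.1 <| norm_eq_zero.1 <|
    eq_zero_of_mul_le_pred_of_bounded hC (fun _ => norm_nonneg _) hbound hstep n

/-- Under the standard-form hypotheses (i')–(iii'), let `K` be a compact
subset of `I × ℝ^d`.  If `(x_n, y_n)` and `(x_n, y'_n)` are two bi-infinite sequences of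
points of `K` with the same first coordinates, following the same branches, i.e.
`T̃_{α_n}(x_n, y_n) = (x_{n+1}, y_{n+1})` and `T̃_{α_n}(x_n, y'_n) = (x_{n+1}, y'_{n+1})`
for all `n ∈ ℤ`, where `T̃_α(x, y) = (T_α x, ((T'_α(x))ᵀ)⁻¹ y + f_α x)`, then
`y_n = y'_n` for all `n ∈ ℤ`. -/
theorem stmt_9 {d : ℕ} {𝒜 : Type*} [Countable 𝒜]
    (I : Set (EuclideanSpace ℝ (Fin d)))
    (hIne : I.Nonempty) (hIcp : IsCompact I) (hIreg : I = closure (interior I))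
    (Iα : 𝒜 → Set (EuclideanSpace ℝ (Fin d)))
    (hsub : ∀ α, Iα α ⊆ I) (hcp : ∀ α, IsCompact (Iα α))
    (hreg : ∀ α, Iα α = closure (interior (Iα α)))
    (hcover : ⋃ α, Iα α = I)
    (hnull : ∀ α β, α ≠ β → volume (Iα α ∩ Iα β) = 0)
    (T : 𝒜 → EuclideanSpace ℝ (Fin d) → EuclideanSpace ℝ (Fin d))
    (T' : 𝒜 → EuclideanSpace ℝ (Fin d) →
      (EuclideanSpace ℝ (Fin d) →L[ℝ] EuclideanSpace ℝ (Fin d)))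
    (hTinj : ∀ α, Set.InjOn (T α) (Iα α))
    (hTim : ∀ α, T α '' Iα α ⊆ I)
    (hTderiv : ∀ α, ∀ x ∈ Iα α, HasFDerivWithinAt (T α) (T' α x) (Iα α) x)
    (hT'cont : ∀ α, ContinuousOn (T' α) (Iα α))
    (C : ℝ) (hC : 1 < C)
    (hexp : ∀ α, ∀ x ∈ Iα α, ∀ v : EuclideanSpace ℝ (Fin d), C * ‖v‖ ≤ ‖T' α x v‖)
    (hTcover : ⋃ α, T α '' Iα α = I)
    (W : 𝒜 → EuclideanSpace ℝ (Fin d) →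
      (EuclideanSpace ℝ (Fin d) →L[ℝ] EuclideanSpace ℝ (Fin d)))
    (hW : ∀ α, ∀ x ∈ Iα α, ∀ y : EuclideanSpace ℝ (Fin d),
      ContinuousLinearMap.adjoint (T' α x) (W α x y) = y ∧
      W α x (ContinuousLinearMap.adjoint (T' α x) y) = y)
    (hWcont : ∀ α, ContinuousOn (W α) (Iα α))
    (f : 𝒜 → EuclideanSpace ℝ (Fin d) → EuclideanSpace ℝ (Fin d))
    (hfcont : ∀ α, ContinuousOn (f α) (Iα α))
    (B : ℝ) (hfbd : ∀ α, ∀ x ∈ Iα α, ‖f α x‖ ≤ B)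
    (K : Set (EuclideanSpace ℝ (Fin d) × EuclideanSpace ℝ (Fin d)))
    (hKcp : IsCompact K)
    (x y y' : ℤ → EuclideanSpace ℝ (Fin d)) (αseq : ℤ → 𝒜)
    (hxy : ∀ n : ℤ, (x n, y n) ∈ K) (hxy' : ∀ n : ℤ, (x n, y' n) ∈ K)
    (hxα : ∀ n : ℤ, x n ∈ Iα (αseq n))
    (hrec : ∀ n : ℤ,
      (T (αseq n) (x n), W (αseq n) (x n) (y n) + f (αseq n) (x n))
        = (x (n + 1), y (n + 1)))
    (hrec' : ∀ n : ℤ,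
      (T (αseq n) (x n), W (αseq n) (x n) (y' n) + f (αseq n) (x n))
        = (x (n + 1), y' (n + 1))) :
    ∀ n : ℤ, y n = y' n :=
  stmt_9_general Iα T T' C hC hexp W hW f K hKcp x y y' αseq hxy hxy' hxα hrec hrec'
end

section
/- Let a, b, c, d ∈ ℝ with ad − bc = 1, and define T̂(x, v) := ((ax+b)/(cx+d), (dv−c)/(a−bv)) on the open set V := {(x, v) ∈ ℝ² : cx + d ≠ 0, a − bv ≠ 0, 1 + xv ≠ 0}. Then T̂ preserves the measure with density 1/(1+xv)²: writing (x', v') = T̂(x, v), at every point of V where 1 + x'v' ≠ 0 one has |det DT̂(x, v)| · 1/(1+x'v')² = 1/(1+xv)². In particular, for any open set U ⊆ V on which T̂ is injective and 1 + x'v' ≠ 0, ∫_{T̂(U)} dx dv/(1+xv)² = ∫_U dx dv/(1+xv)². -/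
/-! Both coordinates of `T̂` are Möbius maps of determinant one, with derivatives
`1/(cx+d)²` and `1/(a-bv)²`, so `|det DT̂| = 1/((cx+d)(a-bv))²`. On the other hand
`1 + x'v' = (1+xv)/((cx+d)(a-bv))`, so the density `1/(1+xv)²` picks up exactly the inverse
factor. The integral identity is then the change of variables formula. -/

open MeasureTheory

/-- The map `T̂(x, v) = (M·x, (Mᵀ)⁻¹·v) = ((ax+b)/(cx+d), (dv−c)/(a−bv))` associated to
the matrix `M = (a b; c d)`. -/
noncomputable def mobiusHat (a b c d : ℝ) : ℝ × ℝ → ℝ × ℝ := fun p =>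
  ((a * p.1 + b) / (c * p.1 + d), (d * p.2 - c) / (a - b * p.2))

theorem hasDerivAt_mobius {𝕜 : Type*} [NontriviallyNormedField 𝕜] (a b c d x : 𝕜)
    (hx : c * x + d ≠ 0) :
    HasDerivAt (fun x ↦ (a * x + b) / (c * x + d)) ((a * d - b * c) / (c * x + d) ^ 2) x := by
  have h := (((hasDerivAt_id' x).const_mul a).add_const b).div
    (((hasDerivAt_id' x).const_mul c).add_const d) hx
  rwa [show a * 1 * (c * x + d) - (a * x + b) * (c * 1) = a * d - b * c by ring] at h

noncomputable def mobiusHatDeriv (a b c d : ℝ) (p : ℝ × ℝ) : ℝ × ℝ →L[ℝ] ℝ × ℝ :=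
  (ContinuousLinearMap.toSpanSingleton ℝ (1 / (c * p.1 + d) ^ 2)).prodMap
    (ContinuousLinearMap.toSpanSingleton ℝ (1 / (a - b * p.2) ^ 2))

section

variable {a b c d : ℝ}

theorem det_mobiusHatDeriv (p : ℝ × ℝ) :
    (mobiusHatDeriv a b c d p).det = 1 / (c * p.1 + d) ^ 2 * (1 / (a - b * p.2) ^ 2) := by
  rw [ContinuousLinearMap.det, mobiusHatDeriv, ContinuousLinearMap.coe_prodMap,
    LinearMap.det_prodMap]
  exact congrArg₂ (· * ·) (ContinuousLinearMap.det_toSpanSingleton _)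
    (ContinuousLinearMap.det_toSpanSingleton _)

theorem hasFDerivAt_mobiusHat (hdet : a * d - b * c = 1) {p : ℝ × ℝ} (h₁ : c * p.1 + d ≠ 0)
    (h₂ : a - b * p.2 ≠ 0) :
    HasFDerivAt (mobiusHat a b c d) (mobiusHatDeriv a b c d p) p := by
  have hx := hasDerivAt_mobius a b c d p.1 h₁
  rw [hdet] at hx
  -- `(dv - c)/(a - bv)` is the Möbius map of `(d, -c; -b, a)`, again of determinant one
  have hv := hasDerivAt_mobius d (-c) (-b) a p.2 fun h ↦ h₂ (by linarith)
  rw [show d * a - -c * -b = 1 by linear_combination hdet,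
    show -b * p.2 + a = a - b * p.2 by ring] at hv
  convert hx.hasFDerivAt.prodMap p hv.hasFDerivAt using 1
  · funext q
    simp only [mobiusHat]
    congr 1; ring
  · rfl

theorem one_add_mobiusHat_fst_mul_snd (hdet : a * d - b * c = 1) {p : ℝ × ℝ}
    (h₁ : c * p.1 + d ≠ 0) (h₂ : a - b * p.2 ≠ 0) :
    1 + (mobiusHat a b c d p).1 * (mobiusHat a b c d p).2 =
      (1 + p.1 * p.2) / ((c * p.1 + d) * (a - b * p.2)) := by
  rw [mobiusHat, div_mul_div_comm, one_add_div (mul_ne_zero h₁ h₂)]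
  congr 1
  linear_combination (1 + p.1 * p.2) * hdet

theorem abs_det_mobiusHatDeriv_mul_density (hdet : a * d - b * c = 1) {p : ℝ × ℝ}
    (h₁ : c * p.1 + d ≠ 0) (h₂ : a - b * p.2 ≠ 0) :
    |(mobiusHatDeriv a b c d p).det| *
        (1 / (1 + (mobiusHat a b c d p).1 * (mobiusHat a b c d p).2) ^ 2) =
      1 / (1 + p.1 * p.2) ^ 2 := by
  rw [det_mobiusHatDeriv, abs_of_pos (by positivity), one_add_mobiusHat_fst_mul_snd hdet h₁ h₂]
  field_simp

end

/-- Let `a, b, c, d ∈ ℝ` with `ad − bc = 1` and let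
`T̂(x, v) = ((ax+b)/(cx+d), (dv−c)/(a−bv))` on
`V = {(x, v) | cx + d ≠ 0, a − bv ≠ 0, 1 + xv ≠ 0}`.  Then `T̂` preserves the measure
with density `1/(1+xv)²`: writing `(x', v') = T̂(x, v)`, at every point of `V` where
`1 + x'v' ≠ 0` one has `|det DT̂(x, v)| · 1/(1+x'v')² = 1/(1+xv)²`; and for any open
`U ⊆ V` on which `T̂` is injective and `1 + x'v' ≠ 0`,
`∫_{T̂(U)} dx dv/(1+xv)² = ∫_U dx dv/(1+xv)²`. -/
theorem stmt_12 (a b c d : ℝ) (hdet : a * d - b * c = 1) :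
    (∀ p : ℝ × ℝ, c * p.1 + d ≠ 0 → a - b * p.2 ≠ 0 → 1 + p.1 * p.2 ≠ 0 →
      1 + (mobiusHat a b c d p).1 * (mobiusHat a b c d p).2 ≠ 0 →
      ∃ D : ℝ × ℝ →L[ℝ] ℝ × ℝ, HasFDerivAt (mobiusHat a b c d) D p ∧
        |LinearMap.det D.toLinearMap| *
          (1 / (1 + (mobiusHat a b c d p).1 * (mobiusHat a b c d p).2) ^ 2) =
          1 / (1 + p.1 * p.2) ^ 2) ∧
    (∀ U : Set (ℝ × ℝ), IsOpen U →
      (∀ p ∈ U, c * p.1 + d ≠ 0 ∧ a - b * p.2 ≠ 0 ∧ 1 + p.1 * p.2 ≠ 0 ∧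
        1 + (mobiusHat a b c d p).1 * (mobiusHat a b c d p).2 ≠ 0) →
      Set.InjOn (mobiusHat a b c d) U →
      ∫ p in mobiusHat a b c d '' U, 1 / (1 + p.1 * p.2) ^ 2 =
        ∫ p in U, 1 / (1 + p.1 * p.2) ^ 2) := by
  refine ⟨fun p h₁ h₂ _ _ ↦ ⟨mobiusHatDeriv a b c d p, hasFDerivAt_mobiusHat hdet h₁ h₂,
    abs_det_mobiusHatDeriv_mul_density hdet h₁ h₂⟩, fun U hU hV hinj ↦ ?_⟩
  rw [integral_image_eq_integral_abs_det_fderiv_smul volume hU.measurableSet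
    (fun p hp ↦ (hasFDerivAt_mobiusHat hdet (hV p hp).1 (hV p hp).2.1).hasFDerivWithinAt) hinj]
  refine setIntegral_congr_fun hU.measurableSet fun p hp ↦ ?_
  exact abs_det_mobiusHatDeriv_mul_density hdet (hV p hp).1 (hV p hp).2.1
end

section
/- Let T̃(x, y) := (1/x − ⌊1/x⌋, x − x²y), defined for x ∈ (0, 1) and y ∈ ℝ. For every integer n ≥ 1, the image under T̃ of the set {(x, y) : 1/(n+1) < x < 1/n, 0 ≤ y ≤ 1/(1+x)} equals the set {(x', y') : 0 < x' < 1, 1/(n+1+x') ≤ y' ≤ 1/(n+x')}. Consequently T̃ maps the set K := {(x, y) : 0 < x < 1, 0 ≤ y ≤ 1/(1+x)} (minus the lines x = 1/n) into K, and the images over n ≥ 1 cover K up to a Lebesgue-null set. -/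
open MeasureTheory

/-- The natural-extension map `T̃(x, y) = (1/x − ⌊1/x⌋, x − x²y)` of the Gauss map. -/
noncomputable def gaussExt : ℝ × ℝ → ℝ × ℝ := fun p =>
  (1 / p.1 - (⌊1 / p.1⌋ : ℝ), p.1 - p.1 ^ 2 * p.2)

/-- The strip `{(x, y) | 1/(n+1) < x < 1/n, 0 ≤ y ≤ 1/(1+x)}`. -/
def gaussStrip (n : ℕ) : Set (ℝ × ℝ) :=
  {p : ℝ × ℝ | 1 / ((n : ℝ) + 1) < p.1 ∧ p.1 < 1 / (n : ℝ) ∧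
    0 ≤ p.2 ∧ p.2 ≤ 1 / (1 + p.1)}

/-- The domain `K = {(x, y) | 0 < x < 1, 0 ≤ y ≤ 1/(1+x)}` of the natural extension of
the Gauss map. -/
def gaussDomain : Set (ℝ × ℝ) :=
  {p : ℝ × ℝ | 0 < p.1 ∧ p.1 < 1 ∧ 0 ≤ p.2 ∧ p.2 ≤ 1 / (1 + p.1)}

/-!
On the strip `1/(n+1) < x < 1/n` the digit `⌊1/x⌋` equals `n`, so `T̃` is the explicit map
`(x, y) ↦ (1/x - n, x - x²y)`, with inverse `(u, v) ↦ (1/(n+u), (n+u) - (n+u)²v)`.  As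
`n + u = 1/x`, the bounds `1/(n+1+u) ≤ v ≤ 1/(n+u)` are the bounds `0 ≤ y ≤ 1/(1+x)` transported
by this map.  A point of `K` with `y > 0` lies in the image of the `n`-th strip for
`n = ⌊1/y - x⌋`, so the images miss only the null segment `y = 0`.
-/

open Set

def gaussStripImage (n : ℕ) : Set (ℝ × ℝ) :=
  {p : ℝ × ℝ | 0 < p.1 ∧ p.1 < 1 ∧
    1 / ((n : ℝ) + 1 + p.1) ≤ p.2 ∧ p.2 ≤ 1 / ((n : ℝ) + p.1)}

lemma gaussExt_of_le_one_div_lt {n : ℕ} {x : ℝ} (h₁ : (n : ℝ) ≤ 1 / x) (h₂ : 1 / x < n + 1)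
    (y : ℝ) : gaussExt (x, y) = (1 / x - n, x - x ^ 2 * y) := by
  have hfloor : ⌊1 / x⌋ = (n : ℤ) := Int.floor_eq_iff.2 ⟨mod_cast h₁, mod_cast h₂⟩
  simp only [gaussExt, hfloor, Int.cast_natCast]

lemma mem_Ioo_one_div_iff_one_div_mem_Ioo {n : ℕ} (hn : 0 < n) {x : ℝ} (hx : 0 < x) :
    x ∈ Ioo (1 / ((n : ℝ) + 1)) (1 / (n : ℝ)) ↔ 1 / x ∈ Ioo (n : ℝ) (n + 1) := by
  have hn' : (0 : ℝ) < n := by exact_mod_cast hn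
  rw [mem_Ioo, mem_Ioo, one_div_lt (by positivity) hx, lt_one_div hx hn', and_comm]

lemma sub_sq_mul_mem_Icc_iff {x : ℝ} (hx : 0 < x) (y : ℝ) :
    x - x ^ 2 * y ∈ Icc (1 / (1 / x + 1)) (1 / (1 / x)) ↔ y ∈ Icc 0 (1 / (1 + x)) := by
  have hx1 : 0 < 1 + x := by linarith
  have hlow : 1 / (1 / x + 1) = x - x ^ 2 * (1 / (1 + x)) := by field_simp; ring
  rw [mem_Icc, mem_Icc, hlow, one_div_one_div, and_comm, sub_le_sub_iff_left, sub_le_self_iff,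
    mul_le_mul_iff_of_pos_left (by positivity), mul_nonneg_iff_of_pos_left (by positivity)]

lemma gaussExt_mapsTo_gaussStripImage {n : ℕ} (hn : 1 ≤ n) :
    MapsTo gaussExt (gaussStrip n) (gaussStripImage n) := by
  rintro ⟨x, y⟩ ⟨hx₁, hx₂, hy₀, hy₁⟩
  have hx : 0 < x := lt_trans (by positivity) hx₁
  obtain ⟨hn₁, hn₂⟩ := (mem_Ioo_one_div_iff_one_div_mem_Ioo hn hx).1 ⟨hx₁, hx₂⟩
  obtain ⟨hv₁, hv₂⟩ := (sub_sq_mul_mem_Icc_iff hx y).2 ⟨hy₀, hy₁⟩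
  rw [gaussExt_of_le_one_div_lt hn₁.le hn₂]
  refine ⟨by simpa using hn₁, by linarith, ?_, ?_⟩
  · simpa [add_right_comm] using hv₁
  · simpa using hv₂

lemma gaussExt_surjOn_gaussStripImage {n : ℕ} (hn : 1 ≤ n) :
    SurjOn gaussExt (gaussStrip n) (gaussStripImage n) := by
  rintro ⟨u, v⟩ ⟨hu₀, hu₁, hv₁, hv₂⟩
  set x := 1 / ((n : ℝ) + u)
  have hx : 0 < x := by positivity
  have hinv : 1 / x = n + u := one_div_one_div _
  have hv : x - x ^ 2 * ((x - v) / x ^ 2) = v := by field_simp; ring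
  obtain ⟨hx₁, hx₂⟩ := (mem_Ioo_one_div_iff_one_div_mem_Ioo hn hx).2
    ⟨by rw [hinv]; linarith, by rw [hinv]; linarith⟩
  obtain ⟨hy₀, hy₁⟩ := (sub_sq_mul_mem_Icc_iff hx ((x - v) / x ^ 2)).1
    ⟨by rwa [hv, hinv, add_right_comm], by rwa [hv, hinv]⟩
  refine ⟨(x, (x - v) / x ^ 2), ⟨hx₁, hx₂, hy₀, hy₁⟩, ?_⟩
  rw [gaussExt_of_le_one_div_lt (by rw [hinv]; linarith) (by rw [hinv]; linarith), hv, hinv,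
    add_sub_cancel_left]

lemma gaussExt_image_gaussStrip {n : ℕ} (hn : 1 ≤ n) :
    gaussExt '' gaussStrip n = gaussStripImage n :=
  (gaussExt_mapsTo_gaussStripImage hn).image_subset.antisymm
    (gaussExt_surjOn_gaussStripImage hn)

lemma gaussStripImage_subset_gaussDomain {n : ℕ} (hn : 1 ≤ n) :
    gaussStripImage n ⊆ gaussDomain := by
  rintro ⟨u, v⟩ ⟨hu₀, hu₁, hv₁, hv₂⟩
  have hn' : (1 : ℝ) ≤ n := by exact_mod_cast hn
  refine ⟨hu₀, hu₁, le_trans (by positivity) hv₁, hv₂.trans ?_⟩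
  exact one_div_le_one_div_of_le (by linarith) (by linarith)

lemma exists_mem_gaussStrip {p : ℝ × ℝ} (hp : p ∈ gaussDomain)
    (hne : ∀ n : ℕ, 1 ≤ n → p.1 ≠ 1 / (n : ℝ)) : ∃ n, 1 ≤ n ∧ p ∈ gaussStrip n := by
  obtain ⟨hx₀, hx₁, hy₀, hy₁⟩ := hp
  have hinv : 1 < 1 / p.1 := by rwa [lt_one_div one_pos hx₀, div_one]
  set n := ⌊1 / p.1⌋₊
  have hn : 1 ≤ n := Nat.le_floor (by exact_mod_cast hinv.le)
  have hn_ne : (n : ℝ) ≠ 1 / p.1 := fun h => hne n hn (by rw [h, one_div_one_div])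
  obtain ⟨hs₁, hs₂⟩ := (mem_Ioo_one_div_iff_one_div_mem_Ioo hn hx₀).2
    ⟨(Nat.floor_le (by linarith)).lt_of_ne hn_ne, Nat.lt_floor_add_one _⟩
  exact ⟨n, hn, hs₁, hs₂, hy₀, hy₁⟩

lemma exists_mem_gaussStripImage {p : ℝ × ℝ} (hp : p ∈ gaussDomain) (hy : 0 < p.2) :
    ∃ n, 1 ≤ n ∧ p ∈ gaussStripImage n := by
  obtain ⟨hx₀, hx₁, -, hy₁⟩ := hp
  have hinv : 1 + p.1 ≤ 1 / p.2 := (le_one_div hy (by linarith)).1 hy₁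
  set n := ⌊1 / p.2 - p.1⌋₊
  have hn : 1 ≤ n := Nat.le_floor (by push_cast; linarith)
  have hn₁ : (n : ℝ) ≤ 1 / p.2 - p.1 := Nat.floor_le (by linarith)
  have hn₂ : 1 / p.2 - p.1 < n + 1 := Nat.lt_floor_add_one _
  have hn' : (1 : ℝ) ≤ n := by exact_mod_cast hn
  refine ⟨n, hn, hx₀, hx₁, ?_, ?_⟩
  · exact (one_div_le (by linarith) hy).2 (by linarith)
  · exact (le_one_div hy (by linarith)).2 (by linarith)

/-- For the Gauss natural-extension map
`T̃(x, y) = (1/x − ⌊1/x⌋, x − x²y)` and every integer `n ≥ 1`, the image of the strip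
`{(x, y) | 1/(n+1) < x < 1/n, 0 ≤ y ≤ 1/(1+x)}` equals
`{(x', y') | 0 < x' < 1, 1/(n+1+x') ≤ y' ≤ 1/(n+x')}`.  Consequently, `T̃` maps
`K = {(x, y) | 0 < x < 1, 0 ≤ y ≤ 1/(1+x)}` minus the lines `x = 1/n` into `K`, and the
images over `n ≥ 1` cover `K` up to a Lebesgue-null set. -/
theorem stmt_13 :
    (∀ n : ℕ, 1 ≤ n →
      gaussExt '' gaussStrip n =
        {p : ℝ × ℝ | 0 < p.1 ∧ p.1 < 1 ∧
          1 / ((n : ℝ) + 1 + p.1) ≤ p.2 ∧ p.2 ≤ 1 / ((n : ℝ) + p.1)}) ∧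
    gaussExt '' {p ∈ gaussDomain | ∀ n : ℕ, 1 ≤ n → p.1 ≠ 1 / (n : ℝ)} ⊆ gaussDomain ∧
    volume (gaussDomain \ ⋃ n : ℕ, ⋃ _ : 1 ≤ n, gaussExt '' gaussStrip n) = 0 := by
  refine ⟨fun n hn => gaussExt_image_gaussStrip hn, ?_, ?_⟩
  · rintro _ ⟨p, ⟨hp, hne⟩, rfl⟩
    obtain ⟨n, hn, hpn⟩ := exists_mem_gaussStrip hp hne
    exact gaussStripImage_subset_gaussDomain hn (gaussExt_mapsTo_gaussStripImage hn hpn)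
  · refine measure_mono_null (t := univ ×ˢ {0}) ?_ ?_
    · rintro p ⟨hp, hcov⟩
      refine ⟨trivial, (eq_of_le_of_not_lt hp.2.2.1 fun hy => hcov ?_).symm⟩
      obtain ⟨n, hn, hpn⟩ := exists_mem_gaussStripImage hp hy
      exact mem_iUnion₂.2 ⟨n, hn, (gaussExt_image_gaussStrip hn).symm ▸ hpn⟩
    · rw [Measure.volume_eq_prod, Measure.prod_prod, Real.volume_singleton, mul_zero]
end

section
/- Let T : [0, 1] → [0, 1] be the Gauss map, T(x) := 1/x − ⌊1/x⌋ for x ∈ (0, 1] and T(0) := 0. Then the Borel measure μ on [0, 1] with density x ↦ 1/((1+x)·log 2) with respect to Lebesgue measure is a T-invariant probability measure: μ([0,1]) = 1 and the pushforward of μ under T equals μ. -/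
/-!
The measure `μ` has distribution function `μ [0, t] = log (1 + t) / log 2` on `[0, 1]`, so it
suffices to compare `μ (T⁻¹ [0, t])` with this. On `(0, 1]` the set `T⁻¹ [0, t]` is the disjoint
union over `k ≥ 1` of the intervals `[1/(k+t), 1/k]`, and
`μ [1/(k+t), 1/k] = (g k - g (k+1)) / log 2` with `g k = log (1 + t/k)`.
Since `g k → 0`, the series telescopes to `g 1 / log 2 = log (1 + t) / log 2`.
-/

open MeasureTheory

/-- The Gauss continued fraction map `T(x) = 1/x − ⌊1/x⌋` for `x ≠ 0`, with `T(0) = 0`. -/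
noncomputable def gaussMap (x : ℝ) : ℝ :=
  if x = 0 then 0 else 1 / x - (⌊1 / x⌋ : ℝ)

/-- The Gauss measure on `[0, 1]`: density `1/((1+x)·log 2)` w.r.t. Lebesgue measure. -/
noncomputable def gaussMeasure : Measure ℝ :=
  (volume.restrict (Set.Icc (0 : ℝ) 1)).withDensity
    (fun x => ENNReal.ofReal (1 / ((1 + x) * Real.log 2)))

open Set Filter Topology Real Function

theorem measurable_gaussMap : Measurable gaussMap :=
  Measurable.ite (measurableSet_singleton 0) measurable_const <|
    (measurable_const.div measurable_id).sub
      (measurable_from_top.comp (Int.measurable_floor.comp (measurable_const.div measurable_id)))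

theorem gaussMap_nonneg (x : ℝ) : 0 ≤ gaussMap x := by
  unfold gaussMap
  split_ifs
  exacts [le_rfl, sub_nonneg.2 (Int.floor_le _)]

theorem gaussMap_lt_one (x : ℝ) : gaussMap x < 1 := by
  unfold gaussMap
  split_ifs
  · exact one_pos
  · linarith [Int.sub_one_lt_floor (1 / x)]

theorem gaussMap_le_iff_exists_mem_Icc {x t : ℝ} (hx : x ∈ Ioc 0 1) (ht0 : 0 ≤ t) (ht1 : t < 1) :
    gaussMap x ≤ t ↔ ∃ n : ℕ, x ∈ Icc ((n + 1 + t)⁻¹) ((n + 1 : ℝ)⁻¹) := by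
  obtain ⟨hx0, hx1⟩ := hx
  rw [gaussMap, if_neg hx0.ne', one_div]
  constructor
  · intro hle
    have hfloor : 1 ≤ ⌊x⁻¹⌋ := Int.le_floor.2 (by simpa using one_le_inv₀ hx0 |>.2 hx1)
    obtain ⟨n, hn⟩ := Int.eq_ofNat_of_zero_le (sub_nonneg.2 hfloor)
    have hn' : (⌊x⁻¹⌋ : ℝ) = n + 1 := by
      rw [show ⌊x⁻¹⌋ = n + 1 by omega]; push_cast; ring
    refine ⟨n, ?_, ?_⟩
    · rw [inv_le_comm₀ (by positivity) hx0]; linarith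
    · rw [le_inv_comm₀ hx0 (by positivity), ← hn']; exact Int.floor_le _
  · rintro ⟨n, hlo, hhi⟩
    rw [inv_le_comm₀ (by positivity) hx0] at hlo
    rw [le_inv_comm₀ hx0 (by positivity)] at hhi
    have hn : ⌊x⁻¹⌋ = n + 1 := by
      rw [Int.floor_eq_iff]; push_cast; constructor <;> linarith
    rw [hn]; push_cast; linarith

theorem gaussMap_preimage_Iic_inter_Ioc {t : ℝ} (ht0 : 0 ≤ t) (ht1 : t < 1) :
    gaussMap ⁻¹' Iic t ∩ Ioc 0 1 = ⋃ n : ℕ, Icc ((n + 1 + t)⁻¹) ((n + 1 : ℝ)⁻¹) := by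
  ext x
  simp only [mem_inter_iff, mem_preimage, mem_Iic, mem_iUnion]
  constructor
  · rintro ⟨hle, hx⟩
    exact (gaussMap_le_iff_exists_mem_Icc hx ht0 ht1).1 hle
  · rintro ⟨n, hn⟩
    have hx : x ∈ Ioc 0 1 :=
      ⟨(inv_pos.2 (by positivity)).trans_le hn.1,
        hn.2.trans (inv_le_one_of_one_le₀ (by linarith [n.cast_nonneg (α := ℝ)]))⟩
    exact ⟨(gaussMap_le_iff_exists_mem_Icc hx ht0 ht1).2 ⟨n, hn⟩, hx⟩

theorem gaussMeasure_inter_Ioc {s : Set ℝ} (hs : MeasurableSet s) :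
    gaussMeasure (s ∩ Ioc 0 1) = gaussMeasure s := by
  rw [gaussMeasure, ← restrict_Ioc_eq_restrict_Icc, withDensity_apply _ hs,
    withDensity_apply _ (hs.inter measurableSet_Ioc), Measure.restrict_restrict hs,
    Measure.restrict_restrict (hs.inter measurableSet_Ioc), inter_assoc, inter_self]

theorem gaussMeasure_Ioc {a b : ℝ} (ha : 0 ≤ a) (hab : a ≤ b) (hb : b ≤ 1) :
    gaussMeasure (Ioc a b) = ENNReal.ofReal (log ((1 + b) / (1 + a)) / log 2) := by
  have hdensity (x : ℝ) : 1 / ((1 + x) * log 2) = (1 + x)⁻¹ / log 2 := by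
    rw [one_div, mul_inv, div_eq_mul_inv]
  have hcont : ContinuousOn (fun x : ℝ => (1 + x)⁻¹ / log 2) (uIcc a b) := by
    refine ((continuousOn_const.add continuousOn_id).inv₀ fun x hx => ?_).div_const _
    rw [uIcc_of_le hab] at hx
    show 1 + x ≠ 0
    linarith [hx.1]
  have hint : IntegrableOn (fun x : ℝ => (1 + x)⁻¹ / log 2) (Ioc a b) :=
    (intervalIntegrable_iff_integrableOn_Ioc_of_le hab).1 hcont.intervalIntegrable
  have hnonneg : 0 ≤ᵐ[volume.restrict (Ioc a b)] fun x : ℝ => (1 + x)⁻¹ / log 2 := by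
    filter_upwards [ae_restrict_mem measurableSet_Ioc] with x hx
    have : 0 < 1 + x := by linarith [hx.1]
    positivity
  rw [gaussMeasure, withDensity_apply _ measurableSet_Ioc,
    Measure.restrict_restrict measurableSet_Ioc,
    inter_eq_left.2 (Ioc_subset_Icc_self.trans (Icc_subset_Icc ha hb))]
  simp_rw [hdensity]
  rw [← ofReal_integral_eq_lintegral_ofReal hint hnonneg, ← intervalIntegral.integral_of_le hab,
    intervalIntegral.integral_div, intervalIntegral.integral_comp_add_left (fun x => x⁻¹),
    integral_inv_of_pos (by linarith) (by linarith)]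

instance : NullSingletonClass gaussMeasure := by
  unfold gaussMeasure; infer_instance

theorem gaussMeasure_Icc {a b : ℝ} (ha : 0 ≤ a) (hab : a ≤ b) (hb : b ≤ 1) :
    gaussMeasure (Icc a b) = ENNReal.ofReal (log ((1 + b) / (1 + a)) / log 2) := by
  rw [← gaussMeasure_Ioc ha hab hb, measure_congr Ioc_ae_eq_Icc]

theorem gaussMeasure_Icc_zero_one : gaussMeasure (Icc 0 1) = 1 := by
  rw [gaussMeasure_Icc le_rfl zero_le_one le_rfl]
  norm_num [div_self (log_pos one_lt_two).ne']

instance : IsProbabilityMeasure gaussMeasure where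
  measure_univ := by
    rw [← gaussMeasure_inter_Ioc MeasurableSet.univ, univ_inter, measure_congr Ioc_ae_eq_Icc,
      gaussMeasure_Icc_zero_one]

theorem hasSum_sub_succ_of_antitone {f : ℕ → ℝ} (hf : Antitone f)
    (hlim : Tendsto f atTop (𝓝 0)) : HasSum (fun n => f n - f (n + 1)) (f 0) := by
  rw [hasSum_iff_tendsto_nat_of_nonneg fun n => sub_nonneg.2 (hf n.le_succ)]
  simp_rw [Finset.sum_range_sub']
  simpa using hlim.const_sub (f 0)

theorem antitone_log_one_add_div {t : ℝ} (ht : 0 ≤ t) :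
    Antitone fun n : ℕ => log (1 + t / (n + 1)) := fun m n hmn => by
  have : (m : ℝ) + 1 ≤ n + 1 := by exact_mod_cast Nat.succ_le_succ hmn
  dsimp only
  gcongr

theorem tendsto_log_one_add_div (t : ℝ) :
    Tendsto (fun n : ℕ => log (1 + t / (n + 1))) atTop (𝓝 0) := by
  have h : Tendsto (fun n : ℕ => 1 + t / ((n : ℝ) + 1)) atTop (𝓝 1) := by
    simpa [comp_def] using
      ((tendsto_const_div_atTop_nhds_zero_nat t).comp (tendsto_add_atTop_nat 1)).const_add 1
  simpa [comp_def] using (continuousAt_log one_ne_zero).tendsto.comp h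

theorem pairwise_disjoint_Icc_inv {t : ℝ} (ht0 : 0 ≤ t) (ht1 : t < 1) :
    Pairwise (Disjoint on fun n : ℕ => Icc ((n + 1 + t)⁻¹) ((n + 1 : ℝ)⁻¹)) := by
  refine (pairwise_disjoint_on _).2 fun m n hmn => Set.disjoint_left.2 ?_
  rintro x ⟨hxm, -⟩ ⟨-, hxn⟩
  have hm : (m : ℝ) + 1 ≤ n := by exact_mod_cast hmn
  have : (m : ℝ) + 1 + t < n + 1 := by linarith
  linarith [inv_strictAnti₀ (by positivity) this]

theorem gaussMeasure_iUnion_Icc {t : ℝ} (ht0 : 0 ≤ t) (ht1 : t < 1) :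
    gaussMeasure (⋃ n : ℕ, Icc ((n + 1 + t)⁻¹) ((n + 1 : ℝ)⁻¹)) =
      ENNReal.ofReal (log (1 + t) / log 2) := by
  set g : ℕ → ℝ := fun n => log (1 + t / (n + 1)) with hg
  -- `(1 + 1/k) / (1 + 1/(k+t)) = (1 + t/k) / (1 + t/(k+1))`: the pieces telescope.
  have hpiece (n : ℕ) : gaussMeasure (Icc ((n + 1 + t)⁻¹) ((n + 1 : ℝ)⁻¹)) =
      ENNReal.ofReal ((g n - g (n + 1)) / log 2) := by
    have hk : (0 : ℝ) < n + 1 := by positivity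
    rw [gaussMeasure_Icc (by positivity) (inv_anti₀ hk (by linarith))
      (inv_le_one_of_one_le₀ (by linarith [n.cast_nonneg (α := ℝ)])), hg,
      ← log_div (by positivity) (by positivity)]
    congr 3
    push_cast
    field_simp
    ring
  have hsum := (hasSum_sub_succ_of_antitone (antitone_log_one_add_div ht0)
    (tendsto_log_one_add_div t)).div_const (log 2)
  have hnonneg (n : ℕ) : 0 ≤ (g n - g (n + 1)) / log 2 :=
    div_nonneg (sub_nonneg.2 (antitone_log_one_add_div ht0 n.le_succ)) (log_pos one_lt_two).le
  rw [measure_iUnion (pairwise_disjoint_Icc_inv ht0 ht1) fun _ => measurableSet_Icc, funext hpiece,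
    ← ENNReal.ofReal_tsum_of_nonneg hnonneg hsum.summable, hsum.tsum_eq]
  norm_num

theorem gaussMeasure_preimage_Iic (t : ℝ) :
    gaussMeasure (gaussMap ⁻¹' Iic t) = gaussMeasure (Iic t) := by
  rw [← gaussMeasure_inter_Ioc (measurable_gaussMap measurableSet_Iic),
    ← gaussMeasure_inter_Ioc measurableSet_Iic]
  rcases lt_or_ge t 0 with ht0 | ht0
  · have hT : gaussMap ⁻¹' Iic t = ∅ :=
      eq_empty_of_forall_notMem fun x hx => (gaussMap_nonneg x).not_gt (lt_of_le_of_lt hx ht0)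
    have hI : Iic t ∩ Ioc 0 1 = ∅ :=
      eq_empty_of_forall_notMem fun x hx => (hx.1.trans_lt ht0).not_gt hx.2.1
    rw [hT, hI, empty_inter]
  rcases lt_or_ge t 1 with ht1 | ht1
  · rw [gaussMap_preimage_Iic_inter_Ioc ht0 ht1, gaussMeasure_iUnion_Icc ht0 ht1,
      Iic_inter_Ioc_of_le ht1.le, gaussMeasure_Ioc le_rfl ht0 ht1.le, add_zero, div_one]
  · have hT : gaussMap ⁻¹' Iic t = univ :=
      eq_univ_of_forall fun x => (gaussMap_lt_one x).le.trans ht1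
    rw [hT, univ_inter, inter_eq_right.2 fun x hx => hx.2.trans ht1]

/-- The Borel measure `μ` on `[0, 1]` with density
`x ↦ 1/((1+x)·log 2)` with respect to Lebesgue measure is a probability measure invariant
under the Gauss map `T(x) = 1/x − ⌊1/x⌋` (`T(0) = 0`): `μ([0,1]) = 1` and the
pushforward of `μ` under `T` equals `μ`. -/
theorem stmt_14 :
    gaussMeasure (Set.Icc (0 : ℝ) 1) = 1 ∧
    Measure.map gaussMap gaussMeasure = gaussMeasure :=
  ⟨gaussMeasure_Icc_zero_one, Measure.ext_of_Iic _ _ fun t => by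
    rw [Measure.map_apply measurable_gaussMap measurableSet_Iic, gaussMeasure_preimage_Iic]⟩
end

section
/- Define T̂ on [0, 1]² (for x irrational) by T̂(x, u) := (1/x − ⌊1/x⌋, 1/(⌊1/x⌋ + u)). Then T̂ preserves the Borel measure on [0, 1]² with density (x, u) ↦ 1/(1+xu)² with respect to two-dimensional Lebesgue measure: the pushforward of this measure under T̂ equals itself. -/
/-!
Up to null sets, `[0, 1]²` is the disjoint union of the vertical strips `Iₙ × (0, 1)` and also of
the horizontal strips `(0, 1) × Iₙ`, where `Iₙ = (1/(n+2), 1/(n+1))` is the set where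
`⌊1/x⌋ = n + 1`. On `Iₙ × (0, 1)` the map is the diffeomorphism
`(x, u) ↦ (1/x - (n+1), 1/(n+1+u))` onto `(0, 1) × Iₙ`, with Jacobian `1/(x² (n+1+u)²)`.
Since `1 + (1/x - (n+1)) / (n+1+u) = (1+xu) / (x (n+1+u))`, the density `ρ = 1/(1+xu)²` satisfies
`ρ = |J| · (ρ ∘ T̂)` there, so by the change of variables formula `T̂` pushes `ρ · Leb` on each
vertical strip to `ρ · Leb` on the corresponding horizontal strip.
-/

open MeasureTheory

/-- The natural extension `T̂(x, u) = (1/x − ⌊1/x⌋, 1/(⌊1/x⌋ + u))` of the Gauss map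
(defined arbitrarily, here by the same junk-value formula, at `x = 0`). -/
noncomputable def gaussNatExt : ℝ × ℝ → ℝ × ℝ := fun p =>
  (1 / p.1 - (⌊1 / p.1⌋ : ℝ), 1 / ((⌊1 / p.1⌋ : ℝ) + p.2))

/-- The measure on `[0, 1]²` with density `(x, u) ↦ 1/(1+xu)²` with respect to
two-dimensional Lebesgue measure. -/
noncomputable def gaussExtMeasure : Measure (ℝ × ℝ) :=
  (volume.restrict ((Set.Icc (0 : ℝ) 1) ×ˢ (Set.Icc (0 : ℝ) 1))).withDensity
    (fun p => ENNReal.ofReal (1 / (1 + p.1 * p.2) ^ 2))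

open Set Function

lemma Set.inv_Ioo_of_pos {α : Type*} [Field α] [LinearOrder α] [IsStrictOrderedRing α] {a b : α}
    (ha : 0 < a) (hb : 0 < b) : (Ioo a b)⁻¹ = Ioo b⁻¹ a⁻¹ := by
  ext y
  simp only [mem_inv, mem_Ioo]
  constructor
  · rintro ⟨hay, hyb⟩
    have hy : 0 < y := inv_pos.1 (ha.trans hay)
    exact ⟨(inv_lt_comm₀ hy hb).1 hyb, (lt_inv_comm₀ ha hy).1 hay⟩
  · rintro ⟨hby, hya⟩
    have hy : 0 < y := (inv_pos.2 hb).trans hby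
    exact ⟨(lt_inv_comm₀ ha hy).2 hya, (inv_lt_comm₀ hb hy).1 hby⟩

lemma ContinuousLinearMap.det_prodMap_smulRight {𝕜 : Type*} [NontriviallyNormedField 𝕜]
    (a b : 𝕜) :
    (((1 : 𝕜 →L[𝕜] 𝕜).smulRight a).prodMap ((1 : 𝕜 →L[𝕜] 𝕜).smulRight b)).det = a * b := by
  simp [ContinuousLinearMap.det, LinearMap.det_prodMap]

theorem MeasureTheory.Measure.map_withDensity_comp {α β : Type*} [MeasurableSpace α]
    [MeasurableSpace β] (μ : Measure α) {f : α → β} (hf : Measurable f) {g : β → ENNReal}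
    (hg : Measurable g) :
    (μ.withDensity (g ∘ f)).map f = (μ.map f).withDensity g := by
  ext s hs
  rw [Measure.map_apply hf hs, withDensity_apply _ (hf hs), withDensity_apply _ hs,
    setLIntegral_map hs hg hf, Function.comp_def]

theorem map_prodMap_withDensity_abs_deriv_mul {f g f' g' : ℝ → ℝ} {s t : Set ℝ}
    (hs : MeasurableSet s) (ht : MeasurableSet t)
    (hf : ∀ x ∈ s, HasDerivWithinAt f (f' x) s x) (hg : ∀ u ∈ t, HasDerivWithinAt g (g' u) t u)
    (hfi : InjOn f s) (hgi : InjOn g t) :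
    ((volume.restrict (s ×ˢ t)).withDensity fun p => ENNReal.ofReal |f' p.1 * g' p.2|).map
      (Prod.map f g) = volume.restrict ((f '' s) ×ˢ (g '' t)) := by
  simp_rw [← prodMap_image_prod, ← ContinuousLinearMap.det_prodMap_smulRight]
  refine map_withDensity_abs_det_fderiv_eq_addHaar volume (hs.prod ht).nullMeasurableSet
    (fun p hp => HasFDerivWithinAt.prodMap p ?_ ?_) (hfi.prodMap hgi)
  · exact (hf p.1 hp.1).hasFDerivWithinAt.mono (fst_image_prod_subset s t)
  · exact (hg p.2 hp.2).hasFDerivWithinAt.mono (snd_image_prod_subset s t)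

lemma measurable_gaussNatExt : Measurable gaussNatExt := by
  unfold gaussNatExt
  fun_prop

noncomputable def gaussDensity (p : ℝ × ℝ) : ENNReal := ENNReal.ofReal (1 / (1 + p.1 * p.2) ^ 2)

lemma measurable_gaussDensity : Measurable gaussDensity := by
  unfold gaussDensity
  fun_prop

lemma gaussDensity_eq_abs_deriv_mul {c x u : ℝ} (hx : x ≠ 0) (hcu : c + u ≠ 0) :
    gaussDensity (x, u) =
      ENNReal.ofReal |-(x ^ 2)⁻¹ * (-1 / (c + u) ^ 2)| * gaussDensity (x⁻¹ - c, (c + u)⁻¹) := by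
  have hone : 1 + (x⁻¹ - c) * (c + u)⁻¹ = (1 + x * u) / (x * (c + u)) := by
    field_simp
    ring
  have hjac : |-(x ^ 2)⁻¹ * (-1 / (c + u) ^ 2)| = (x ^ 2)⁻¹ * ((c + u) ^ 2)⁻¹ := by
    rw [neg_div, neg_mul_neg, abs_of_nonneg (by positivity), one_div]
  rw [gaussDensity, gaussDensity, ← ENNReal.ofReal_mul (abs_nonneg _), hjac, hone, div_pow,
    one_div_div]
  congr 1
  field_simp

/-- Up to its endpoint `1/(n+1)`, the set where the first partial quotient `⌊1/x⌋` is `n + 1`. -/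
def gaussCylinder (n : ℕ) : Set ℝ := Ioo ((n : ℝ) + 2)⁻¹ ((n : ℝ) + 1)⁻¹

lemma pos_of_mem_gaussCylinder {n : ℕ} {x : ℝ} (hx : x ∈ gaussCylinder n) : 0 < x :=
  (by positivity : (0 : ℝ) < _).trans hx.1

lemma gaussCylinder_eq_inv (n : ℕ) : gaussCylinder n = (Ioo ((n : ℝ) + 1) (n + 2))⁻¹ :=
  (inv_Ioo_of_pos (by positivity) (by positivity)).symm

lemma mem_gaussCylinder_iff {n : ℕ} {x : ℝ} :
    x ∈ gaussCylinder n ↔ (n : ℝ) + 1 < x⁻¹ ∧ x⁻¹ < n + 2 := by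
  rw [gaussCylinder_eq_inv, mem_inv, mem_Ioo]

lemma floor_inv_of_mem_gaussCylinder {n : ℕ} {x : ℝ} (hx : x ∈ gaussCylinder n) :
    ⌊x⁻¹⌋ = n + 1 := by
  obtain ⟨hlo, hhi⟩ := mem_gaussCylinder_iff.1 hx
  rw [Int.floor_eq_iff]
  push_cast
  constructor <;> linarith

lemma pairwise_disjoint_gaussCylinder : Pairwise (Disjoint on gaussCylinder) := by
  refine fun m k hmk => disjoint_left.2 fun x hm hk => hmk ?_
  have h := (floor_inv_of_mem_gaussCylinder hm).symm.trans
    (floor_inv_of_mem_gaussCylinder hk)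
  omega

lemma iUnion_gaussCylinder_ae_eq_Icc : (⋃ n, gaussCylinder n) =ᵐ[volume] Icc (0 : ℝ) 1 := by
  have hsub : (⋃ n, gaussCylinder n) ⊆ Icc 0 1 := by
    refine iUnion_subset fun n x hx => ⟨(pos_of_mem_gaussCylinder hx).le, ?_⟩
    exact hx.2.le.trans (inv_le_one_of_one_le₀ (by linarith))
  -- `0⁻¹ = 0 ∈ ℤ`, so this exceptional set also contains `x = 0`.
  have hdiff : Icc 0 1 \ (⋃ n, gaussCylinder n) ⊆ Inv.inv ⁻¹' range (Int.cast : ℤ → ℝ) := by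
    rintro x ⟨⟨hx0, hx1⟩, hx⟩
    by_contra hint
    have hpos : 0 < x := hx0.lt_of_ne' fun h => hint ⟨0, by simp [h]⟩
    have hone : 1 ≤ x⁻¹ := one_le_inv₀ hpos |>.2 hx1
    obtain ⟨n, hn⟩ := Nat.exists_eq_add_of_le' (Nat.le_floor (by exact_mod_cast hone) : 1 ≤ ⌊x⁻¹⌋₊)
    have hne : (⌊x⁻¹⌋₊ : ℝ) ≠ x⁻¹ := fun h => hint ⟨⌊x⁻¹⌋₊, by exact_mod_cast h⟩
    have hlo := (Nat.floor_le (inv_nonneg.2 hx0)).lt_of_ne hne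
    have hhi := Nat.lt_floor_add_one x⁻¹
    rw [hn, Nat.cast_add_one] at hlo hhi
    exact hx (mem_iUnion.2 ⟨n, mem_gaussCylinder_iff.2 ⟨hlo, by linarith⟩⟩)
  refine ae_eq_set.2 ⟨by rw [sdiff_eq_empty.2 hsub, measure_empty], measure_mono_null hdiff ?_⟩
  exact ((countable_range _).preimage inv_injective).measure_zero volume

lemma image_inv_sub_gaussCylinder (n : ℕ) :
    (fun x : ℝ => x⁻¹ - (n + 1)) '' gaussCylinder n = Ioo 0 1 := by
  rw [show (fun x : ℝ => x⁻¹ - (n + 1)) = (· - ((n : ℝ) + 1)) ∘ Inv.inv from rfl, image_comp,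
    image_inv_eq_inv, gaussCylinder_eq_inv, inv_inv, image_sub_const_Ioo]
  norm_num [add_sub_add_left_eq_sub]

lemma image_inv_add_Ioo (n : ℕ) :
    (fun u : ℝ => ((n : ℝ) + 1 + u)⁻¹) '' Ioo 0 1 = gaussCylinder n := by
  rw [show (fun u : ℝ => ((n : ℝ) + 1 + u)⁻¹) = Inv.inv ∘ (((n : ℝ) + 1) + ·) from rfl, image_comp,
    image_const_add_Ioo, image_inv_eq_inv, gaussCylinder_eq_inv]
  norm_num [add_assoc, one_add_one_eq_two]

noncomputable def gaussBranch (n : ℕ) : ℝ × ℝ → ℝ × ℝ :=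
  Prod.map (fun x => x⁻¹ - (n + 1)) (fun u => ((n : ℝ) + 1 + u)⁻¹)

lemma eqOn_gaussNatExt_gaussBranch (n : ℕ) :
    EqOn gaussNatExt (gaussBranch n) (gaussCylinder n ×ˢ univ) := by
  intro p hp
  simp only [gaussNatExt, gaussBranch, one_div, floor_inv_of_mem_gaussCylinder hp.1, Prod.map]
  push_cast
  rfl

lemma map_gaussBranch (n : ℕ) :
    ((volume.restrict (gaussCylinder n ×ˢ Ioo 0 1)).withDensity
      fun p => ENNReal.ofReal |-(p.1 ^ 2)⁻¹ * (-1 / ((n : ℝ) + 1 + p.2) ^ 2)|).map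
        (gaussBranch n) = volume.restrict (Ioo 0 1 ×ˢ gaussCylinder n) := by
  have h := map_prodMap_withDensity_abs_deriv_mul (f := fun x : ℝ => x⁻¹ - (n + 1))
    (g := fun u => ((n : ℝ) + 1 + u)⁻¹) (f' := fun x => -(x ^ 2)⁻¹)
    (g' := fun u => -1 / ((n : ℝ) + 1 + u) ^ 2) (s := gaussCylinder n) (t := Ioo 0 1)
    measurableSet_Ioo measurableSet_Ioo ?_ ?_ ?_ ?_
  · rwa [image_inv_sub_gaussCylinder, image_inv_add_Ioo] at h
  · exact fun x hx =>
      ((hasDerivAt_inv (pos_of_mem_gaussCylinder hx).ne').sub_const _).hasDerivWithinAt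
  · intro u hu
    have hu' : (n : ℝ) + 1 + u ≠ 0 := by have := hu.1; positivity
    exact (((hasDerivAt_id' u).const_add _).inv hu').hasDerivWithinAt
  · exact (sub_left_injective.comp inv_injective).injOn
  · exact (inv_injective.comp (add_right_injective _)).injOn

theorem map_gaussNatExt_strip (n : ℕ) :
    ((volume.restrict (gaussCylinder n ×ˢ Ioo 0 1)).withDensity gaussDensity).map gaussNatExt =
      (volume.restrict (Ioo 0 1 ×ˢ gaussCylinder n)).withDensity gaussDensity := by
  have hS : MeasurableSet (gaussCylinder n ×ˢ Ioo (0 : ℝ) 1) :=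
    measurableSet_Ioo.prod measurableSet_Ioo
  have hbranch : ∀ p ∈ gaussCylinder n ×ˢ Ioo (0 : ℝ) 1, gaussNatExt p = gaussBranch n p :=
    fun p hp => eqOn_gaussNatExt_gaussBranch n ⟨hp.1, trivial⟩
  have hdensity : (volume.restrict (gaussCylinder n ×ˢ Ioo 0 1)).withDensity gaussDensity =
      (volume.restrict (gaussCylinder n ×ˢ Ioo 0 1)).withDensity
        ((fun p => ENNReal.ofReal |-(p.1 ^ 2)⁻¹ * (-1 / ((n : ℝ) + 1 + p.2) ^ 2)|) *
          gaussDensity ∘ gaussNatExt) := by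
    refine withDensity_congr_ae (ae_restrict_of_forall_mem hS fun p hp => ?_)
    have hx := pos_of_mem_gaussCylinder hp.1
    have hu : 0 < (n : ℝ) + 1 + p.2 := by have := hp.2.1; positivity
    rw [Pi.mul_apply, comp_apply, hbranch p hp]
    exact gaussDensity_eq_abs_deriv_mul hx.ne' hu.ne'
  rw [hdensity,
    withDensity_mul _ (by fun_prop) (measurable_gaussDensity.comp measurable_gaussNatExt),
    Measure.map_withDensity_comp _ measurable_gaussNatExt measurable_gaussDensity,
    Measure.map_congr ((withDensity_absolutelyContinuous _ _).ae_le
      (ae_restrict_of_forall_mem hS hbranch)), map_gaussBranch]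

lemma gaussExtMeasure_eq_sum {P : ℕ → Set (ℝ × ℝ)} (hP : ∀ n, MeasurableSet (P n))
    (hdisj : Pairwise (Disjoint on P)) (hcover : (⋃ n, P n) =ᵐ[volume] Icc 0 1 ×ˢ Icc 0 1) :
    gaussExtMeasure = Measure.sum fun n => (volume.restrict (P n)).withDensity gaussDensity := by
  rw [gaussExtMeasure, ← Measure.restrict_congr_set hcover, Measure.restrict_iUnion hdisj hP,
    withDensity_sum]
  rfl

lemma gaussExtMeasure_eq_sum_vertical :
    gaussExtMeasure =
      Measure.sum fun n =>
        (volume.restrict (gaussCylinder n ×ˢ Ioo 0 1)).withDensity gaussDensity := by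
  refine gaussExtMeasure_eq_sum (fun n => measurableSet_Ioo.prod measurableSet_Ioo)
    (fun m k hmk => (pairwise_disjoint_gaussCylinder hmk).set_prod_left _ _) ?_
  rw [← iUnion_prod_const, Measure.volume_eq_prod]
  exact Measure.set_prod_ae_eq iUnion_gaussCylinder_ae_eq_Icc Ioo_ae_eq_Icc

lemma gaussExtMeasure_eq_sum_horizontal :
    gaussExtMeasure =
      Measure.sum fun n =>
        (volume.restrict (Ioo 0 1 ×ˢ gaussCylinder n)).withDensity gaussDensity := by
  refine gaussExtMeasure_eq_sum (fun n => measurableSet_Ioo.prod measurableSet_Ioo)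
    (fun m k hmk => (pairwise_disjoint_gaussCylinder hmk).set_prod_right _ _) ?_
  rw [← prod_iUnion, Measure.volume_eq_prod]
  exact Measure.set_prod_ae_eq Ioo_ae_eq_Icc iUnion_gaussCylinder_ae_eq_Icc

/-- The map `T̂(x, u) = (1/x − ⌊1/x⌋, 1/(⌊1/x⌋ + u))` on `[0, 1]²`
preserves the Borel measure with density `(x, u) ↦ 1/(1+xu)²` with respect to
two-dimensional Lebesgue measure: the pushforward of this measure under `T̂` equals
itself. -/
theorem stmt_15 :
    Measure.map gaussNatExt gaussExtMeasure = gaussExtMeasure := by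
  calc Measure.map gaussNatExt gaussExtMeasure
      = Measure.sum fun n => ((volume.restrict (gaussCylinder n ×ˢ Ioo 0 1)).withDensity
          gaussDensity).map gaussNatExt := by
        rw [gaussExtMeasure_eq_sum_vertical, Measure.map_sum measurable_gaussNatExt.aemeasurable]
    _ = gaussExtMeasure := by
        simp_rw [map_gaussNatExt_strip, ← gaussExtMeasure_eq_sum_horizontal]
end
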